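/- arXiv:2111.06577 — 11 statements merged into one kernel-verified Lean document; each statement's English description precedes it below -/
import Mathlib

section
/- For every natural number k ≥ 2, the free group on 2 generators contains a finite-index subgroup isomorphic to the free group on k generators. Consequently free groups of any two finite ranks ≥ 2 are commensurable (they contain isomorphic finite-index subgroups). -/
open FreeGroup Multiplicative
namespace FGC
variable (r m : ℕ)
abbrev I := Option (Fin r × Fin (m + 1))
def ρ : Multiplicative (ZMod (m + 1)) →* MulAut (ZMod (m + 1) → FreeGroup (I r m)) where
  toFun c :=
    { toFun := fun f j => f (j + c.toAdd)
      invFun := fun f j => f (j - c.toAdd)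
      left_inv := fun f => by ext j; simp
      right_inv := fun f => by ext j; simp
      map_mul' := fun f g => rfl }
  map_one' := by ext f j; simp
  map_mul' c d := by ext f j; simp [add_assoc]
abbrev W := (ZMod (m + 1) → FreeGroup (I r m)) ⋊[ρ r m] Multiplicative (ZMod (m + 1))
def ca : ZMod (m + 1) → FreeGroup (I r m) := fun j => if j.val = m then of none else 1
def cb (t : Fin r) : ZMod (m + 1) → FreeGroup (I r m) :=
  fun j => of (some (t, ⟨j.val, j.val_lt⟩))
def A : W r m := ⟨ca r m, ofAdd 1⟩
def B (t : Fin r) : W r m := ⟨cb r m t, 1⟩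
def Φ : FreeGroup (Fin (r + 1)) →* W r m :=
  FreeGroup.lift (fun t => if h : (t : ℕ) < r then B r m ⟨t, h⟩ else A r m)
def gens : I r m → FreeGroup (Fin (r + 1))
  | none => of (Fin.last r) ^ (m + 1)
  | some (t, i) => of (Fin.last r) ^ (i : ℕ) * of t.castSucc * (of (Fin.last r) ^ (i : ℕ))⁻¹
def ψ : FreeGroup (I r m) →* FreeGroup (Fin (r + 1)) := FreeGroup.lift (gens r m)
lemma Φ_a : Φ r m (of (Fin.last r)) = A r m := by simp [Φ, Fin.last]
lemma Φ_b (t : Fin r) : Φ r m (of t.castSucc) = B r m t := by simp [Φ]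
lemma right_pow (w : W r m) (i : ℕ) : (w ^ i).right = w.right ^ i := by
  induction i with
  | zero => simp [SemidirectProduct.one_right]
  | succ i ih => rw [pow_succ, pow_succ, SemidirectProduct.mul_right, ih]
lemma A_right_pow (i : ℕ) : ((A r m) ^ i).right = ofAdd (i : ZMod (m + 1)) := by
  rw [right_pow]
  show (ofAdd (1 : ZMod (m+1))) ^ i = _
  rw [← ofAdd_nsmul]; norm_num
lemma Apow_left_zero (i : ℕ) (hi : i ≤ m + 1) :
    ((A r m) ^ i).left 0 = if i = m + 1 then of none else 1 := by
  induction i with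
  | zero => simp [SemidirectProduct.one_left]
  | succ i ih =>
    have hi' : i ≤ m + 1 := by omega
    rw [pow_succ, SemidirectProduct.mul_left, Pi.mul_apply, ih hi', A_right_pow]
    have hilt : i < m + 1 := by omega
    have : (ρ r m (ofAdd (i : ZMod (m+1)))) (A r m).left 0 = ca r m (i : ZMod (m+1)) := by
      simp [ρ, A]
    rw [this, ca, ZMod.val_natCast_of_lt hilt]
    have : ¬ (i = m + 1) := by omega
    simp only [this, if_false, one_mul]
    by_cases h : i = m
    · simp [h]
    · have h1 : ¬ (i + 1 = m + 1) := by omega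
      simp [h, h1]

-- NEW PART
lemma key_mu (t : I r m) : (Φ r m (ψ r m (of t))).left 0 = of t := by
  cases t with
  | none =>
    have : ψ r m (of none) = of (Fin.last r) ^ (m + 1) := by simp [ψ, gens]
    rw [this, MonoidHom.map_pow, Φ_a, Apow_left_zero r m (m+1) le_rfl]
    simp
  | some p =>
    obtain ⟨t, i⟩ := p
    have : ψ r m (of (some (t, i))) =
        of (Fin.last r) ^ (i : ℕ) * of t.castSucc * (of (Fin.last r) ^ (i : ℕ))⁻¹ := by
      simp [ψ, gens]
    rw [this, MonoidHom.map_mul, MonoidHom.map_mul, MonoidHom.map_inv, MonoidHom.map_pow, Φ_a, Φ_b]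
    have hlt : (i : ℕ) < m + 1 := i.isLt
    have hle : (i : ℕ) ≤ m + 1 := le_of_lt hlt
    set U := (A r m) ^ (i : ℕ) with hU
    rw [SemidirectProduct.mul_left, SemidirectProduct.mul_left, SemidirectProduct.inv_left,
      SemidirectProduct.mul_right]
    simp only [Pi.mul_apply]
    have hB1 : (B r m t).right = 1 := rfl
    rw [hB1, mul_one, A_right_pow]
    have hU0 : U.left 0 = 1 := by
      rw [hU, Apow_left_zero r m _ hle]
      simp [Nat.ne_of_lt hlt]
    -- compute the three factors
    have h2 : (ρ r m (ofAdd (((i:ℕ) : ZMod (m+1))))) (B r m t).left 0 = of (some (t, i)) := by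
      simp only [ρ, B, cb, MonoidHom.coe_mk, OneHom.coe_mk, MulEquiv.coe_mk, Equiv.coe_fn_mk,
        zero_add, toAdd_ofAdd]
      congr 1
      simp [Fin.ext_iff, ZMod.val_natCast_of_lt hlt]
    have h3 : (ρ r m (ofAdd (((i:ℕ) : ZMod (m+1))))) ((ρ r m (ofAdd (((i:ℕ) : ZMod (m+1))))⁻¹) U.left⁻¹) 0
        = U.left⁻¹ 0 := by
      rw [← MulAut.mul_apply, ← MonoidHom.map_mul, mul_inv_cancel, MonoidHom.map_one]
      rfl
    rw [h2, h3]
    simp [hU0]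

lemma right_psi (w : FreeGroup (I r m)) : (Φ r m (ψ r m w)).right = 1 := by
  have : (SemidirectProduct.rightHom.comp ((Φ r m).comp (ψ r m))) = 1 := by
    apply FreeGroup.ext_hom
    intro t
    cases t with
    | none =>
      have : ψ r m (of none) = of (Fin.last r) ^ (m + 1) := by simp [ψ, gens]
      simp only [MonoidHom.comp_apply, this, MonoidHom.map_pow, Φ_a]
      have : SemidirectProduct.rightHom (A r m) = ofAdd (1 : ZMod (m+1)) := rfl
      rw [this, ← ofAdd_nsmul]
      simp [ZMod.natCast_self]
    | some p =>
      obtain ⟨t, i⟩ := p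
      have : ψ r m (of (some (t, i))) =
          of (Fin.last r) ^ (i : ℕ) * of t.castSucc * (of (Fin.last r) ^ (i : ℕ))⁻¹ := by
        simp [ψ, gens]
      simp only [MonoidHom.comp_apply, this, MonoidHom.map_mul, MonoidHom.map_inv,
        MonoidHom.map_pow, Φ_a, Φ_b]
      have hB : SemidirectProduct.rightHom (B r m t) = 1 := rfl
      rw [hB]
      show SemidirectProduct.rightHom (A r m) ^ (i:ℕ) * 1 * (SemidirectProduct.rightHom (A r m) ^ (i:ℕ))⁻¹ = (1 : FreeGroup (I r m) →* Multiplicative (ZMod (m+1))) (of (some (t,i)))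
      simp
  calc (Φ r m (ψ r m w)).right
      = (SemidirectProduct.rightHom.comp ((Φ r m).comp (ψ r m))) w := rfl
    _ = 1 := by rw [this]; rfl

/-- Evaluation at the identity coset, a multiplicative retraction certificate. -/
def μ : FreeGroup (I r m) →* FreeGroup (I r m) :=
  MonoidHom.mk' (fun w => (Φ r m (ψ r m w)).left 0) (by
    intro x y
    show (Φ r m (ψ r m (x * y))).left 0 = _
    rw [MonoidHom.map_mul (ψ r m), MonoidHom.map_mul (Φ r m), SemidirectProduct.mul_left,
      right_psi, MonoidHom.map_one]
    rfl)

lemma μ_eq_id (w : FreeGroup (I r m)) : μ r m w = w := by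
  have : μ r m = MonoidHom.id _ := FreeGroup.ext_hom _ _ (fun t => key_mu r m t)
  rw [this]; rfl

lemma ψ_injective : Function.Injective (ψ r m) := by
  have h : ∀ w, ψ r m w = 1 → w = 1 := by
    intro w hw
    have : μ r m w = 1 := by
      show (Φ r m (ψ r m w)).left 0 = 1
      rw [hw, MonoidHom.map_one]
      rfl
    rwa [μ_eq_id] at this
  intro x y hxy
  have := h (x * y⁻¹) (by rw [MonoidHom.map_mul, MonoidHom.map_inv, hxy, mul_inv_cancel])
  exact mul_inv_eq_one.mp this


/-- The coset map. -/
def φm : FreeGroup (Fin (r + 1)) →* Multiplicative (ZMod (m + 1)) :=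
  FreeGroup.lift (fun t => if (t : ℕ) < r then 1 else ofAdd 1)

lemma φm_a : φm r m (of (Fin.last r)) = ofAdd 1 := by simp [φm, Fin.last]

lemma φm_b (t : Fin r) : φm r m (of t.castSucc) = 1 := by simp [φm]

/-- Range of ψ. -/
def R : Subgroup (FreeGroup (Fin (r + 1))) := (ψ r m).range

lemma mem_R (t : I r m) : gens r m t ∈ R r m := ⟨of t, by simp [ψ]⟩

lemma han : of (Fin.last r) ^ (m + 1) ∈ R r m := mem_R r m none

lemma hb (t : Fin r) (i : Fin (m + 1)) :
    of (Fin.last r) ^ (i : ℕ) * of t.castSucc * (of (Fin.last r) ^ (i : ℕ))⁻¹ ∈ R r m :=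
  mem_R r m (some (t, i))

lemma hdvd (z : ℤ) (h : ((m : ℤ) + 1) ∣ z) : of (Fin.last r) ^ z ∈ R r m := by
  obtain ⟨c, rfl⟩ := h
  rw [zpow_mul]
  refine Subgroup.zpow_mem _ ?_ c
  have : ((m : ℤ) + 1) = ((m + 1 : ℕ) : ℤ) := by push_cast; ring
  rw [this, zpow_natCast]
  exact han r m

lemma R_eq : R r m = Subgroup.closure (Set.range (gens r m)) := FreeGroup.range_lift_eq_closure

lemma hconj (g : FreeGroup (Fin (r + 1))) (hg : g ∈ R r m) :
    of (Fin.last r) * g * (of (Fin.last r))⁻¹ ∈ R r m := by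
  rw [R_eq] at hg ⊢
  induction hg using Subgroup.closure_induction with
  | mem x hx =>
    obtain ⟨t, rfl⟩ := hx
    cases t with
    | none =>
      have : of (Fin.last r) * gens r m none * (of (Fin.last r))⁻¹ = gens r m none := by
        simp only [gens]; group
      rw [this]
      exact Subgroup.subset_closure ⟨none, rfl⟩
    | some p =>
      obtain ⟨t, i⟩ := p
      by_cases hi : (i : ℕ) + 1 < m + 1
      · have : of (Fin.last r) * gens r m (some (t, i)) * (of (Fin.last r))⁻¹ =
            gens r m (some (t, ⟨(i : ℕ) + 1, hi⟩)) := by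
          simp only [gens]; group
        rw [this]
        exact Subgroup.subset_closure ⟨_, rfl⟩
      · have hieq : (i : ℕ) = m := by have := i.isLt; omega
        have : of (Fin.last r) * gens r m (some (t, i)) * (of (Fin.last r))⁻¹ =
            gens r m none * gens r m (some (t, ⟨0, Nat.succ_pos m⟩)) * (gens r m none)⁻¹ := by
          simp only [gens, hieq]; group
        rw [this]
        have h1 := Subgroup.subset_closure (k := Set.range (gens r m)) ⟨none, rfl⟩
        have h2 := Subgroup.subset_closure (k := Set.range (gens r m))
          ⟨some (t, ⟨0, Nat.succ_pos m⟩), rfl⟩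
        exact mul_mem (mul_mem h1 h2) (inv_mem h1)
  | one => simpa using one_mem _
  | mul x y hx hy ihx ihy =>
    have : of (Fin.last r) * (x * y) * (of (Fin.last r))⁻¹ =
        (of (Fin.last r) * x * (of (Fin.last r))⁻¹) * (of (Fin.last r) * y * (of (Fin.last r))⁻¹) := by
      group
    rw [this]; exact mul_mem ihx ihy
  | inv x hx ihx =>
    have : of (Fin.last r) * x⁻¹ * (of (Fin.last r))⁻¹ =
        (of (Fin.last r) * x * (of (Fin.last r))⁻¹)⁻¹ := by group
    rw [this]; exact inv_mem ihx

lemma hconj' (g : FreeGroup (Fin (r + 1))) (hg : g ∈ R r m) :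
    (of (Fin.last r))⁻¹ * g * of (Fin.last r) ∈ R r m := by
  rw [R_eq] at hg ⊢
  induction hg using Subgroup.closure_induction with
  | mem x hx =>
    obtain ⟨t, rfl⟩ := hx
    cases t with
    | none =>
      have : (of (Fin.last r))⁻¹ * gens r m none * of (Fin.last r) = gens r m none := by
        simp only [gens]; group
      rw [this]
      exact Subgroup.subset_closure ⟨none, rfl⟩
    | some p =>
      obtain ⟨t, i⟩ := p
      by_cases hi : 0 < (i : ℕ)
      · have hlt : (i : ℕ) - 1 < m + 1 := by have := i.isLt; omega
        have : (of (Fin.last r))⁻¹ * gens r m (some (t, i)) * of (Fin.last r) =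
            gens r m (some (t, ⟨(i : ℕ) - 1, hlt⟩)) := by
          simp only [gens]
          have : ((i : ℕ) - 1 : ℕ) = (i : ℕ) - 1 := rfl
          obtain ⟨c, hc⟩ : ∃ c, (i : ℕ) = c + 1 := ⟨(i : ℕ) - 1, by omega⟩
          simp only [hc, Nat.add_sub_cancel]
          group
        rw [this]
        exact Subgroup.subset_closure ⟨_, rfl⟩
      · have hieq : (i : ℕ) = 0 := by omega
        have hlt : m < m + 1 := Nat.lt_succ_self m
        have : (of (Fin.last r))⁻¹ * gens r m (some (t, i)) * of (Fin.last r) =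
            (gens r m none)⁻¹ * gens r m (some (t, ⟨m, hlt⟩)) * gens r m none := by
          simp only [gens, hieq]; group
        rw [this]
        have h1 := Subgroup.subset_closure (k := Set.range (gens r m)) ⟨none, rfl⟩
        have h2 := Subgroup.subset_closure (k := Set.range (gens r m))
          ⟨some (t, ⟨m, hlt⟩), rfl⟩
        exact mul_mem (mul_mem (inv_mem h1) h2) h1
  | one => simpa using one_mem _
  | mul x y hx hy ihx ihy =>
    have : (of (Fin.last r))⁻¹ * (x * y) * of (Fin.last r) =
        ((of (Fin.last r))⁻¹ * x * of (Fin.last r)) * ((of (Fin.last r))⁻¹ * y * of (Fin.last r)) := by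
      group
    rw [this]; exact mul_mem ihx ihy
  | inv x hx ihx =>
    have : (of (Fin.last r))⁻¹ * x⁻¹ * of (Fin.last r) =
        ((of (Fin.last r))⁻¹ * x * of (Fin.last r))⁻¹ := by group
    rw [this]; exact inv_mem ihx

lemma hconjz (z : ℤ) (g : FreeGroup (Fin (r + 1))) (hg : g ∈ R r m) :
    of (Fin.last r) ^ z * g * of (Fin.last r) ^ (-z) ∈ R r m := by
  induction z using Int.induction_on with
  | zero => simpa using hg
  | succ k ih =>
    have : of (Fin.last r) ^ ((k : ℤ) + 1) * g * of (Fin.last r) ^ (-((k : ℤ) + 1)) =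
        of (Fin.last r) * (of (Fin.last r) ^ (k : ℤ) * g * of (Fin.last r) ^ (-(k : ℤ))) *
          (of (Fin.last r))⁻¹ := by group
    rw [this]
    exact hconj r m _ ih
  | pred k ih =>
    have : of (Fin.last r) ^ (-(k : ℤ) - 1) * g * of (Fin.last r) ^ (-(-(k : ℤ) - 1)) =
        (of (Fin.last r))⁻¹ * (of (Fin.last r) ^ (-(k : ℤ)) * g * of (Fin.last r) ^ (-(-(k : ℤ)))) *
          of (Fin.last r) := by group
    rw [this]
    exact hconj' r m _ ih


/-- value of the coset map as a natural number -/
def v (g : FreeGroup (Fin (r + 1))) : ℕ := (toAdd (φm r m g)).val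

lemma hcast (g : FreeGroup (Fin (r + 1))) :
    ((v r m g : ℕ) : ZMod (m + 1)) = toAdd (φm r m g) := by
  rw [v, ZMod.natCast_val, ZMod.cast_id]

lemma main_mem (g : FreeGroup (Fin (r + 1))) :
    g * of (Fin.last r) ^ (-(v r m g : ℤ)) ∈ R r m := by
  induction g using FreeGroup.induction_on with
  | C1 =>
    have : v r m 1 = 0 := by simp [v]
    simp [this, one_mem]
  | of t =>
    show of t * of (Fin.last r) ^ (-(v r m (of t) : ℤ)) ∈ R r m
    by_cases h : (t : ℕ) < r
    · have ht : t = Fin.castSucc ⟨(t : ℕ), h⟩ := by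
        apply Fin.ext; simp
      have hv : v r m (of t) = 0 := by
        rw [v, ht, φm_b]; simp
      rw [hv]
      have : (of t : FreeGroup (Fin (r+1))) ∈ R r m := by
        have := hb r m ⟨(t : ℕ), h⟩ ⟨0, Nat.succ_pos m⟩
        simpa [← ht] using this
      simpa using this
    · have ht : t = Fin.last r := by
        apply Fin.ext; have := t.isLt; simp; omega
      subst ht
      have : (of (Fin.last r) : FreeGroup (Fin (r+1))) * of (Fin.last r) ^ (-(v r m (of (Fin.last r)) : ℤ))
          = of (Fin.last r) ^ ((1 : ℤ) - (v r m (of (Fin.last r)) : ℤ)) := by group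
      rw [this]
      apply hdvd
      have : (((1 : ℤ) - (v r m (of (Fin.last r)) : ℤ) : ℤ) : ZMod (m+1)) = 0 := by
        push_cast
        rw [hcast, φm_a]
        simp
      rwa [ZMod.intCast_zmod_eq_zero_iff_dvd, Nat.cast_add, Nat.cast_one] at this
  | inv_of t _ =>
    show (of t)⁻¹ * of (Fin.last r) ^ (-(v r m ((of t)⁻¹) : ℤ)) ∈ R r m
    by_cases h : (t : ℕ) < r
    · have ht : t = Fin.castSucc ⟨(t : ℕ), h⟩ := by
        apply Fin.ext; simp
      have hv : v r m ((of t)⁻¹) = 0 := by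
        rw [v, MonoidHom.map_inv, ht, φm_b]; simp
      rw [hv]
      have : (of t : FreeGroup (Fin (r+1))) ∈ R r m := by
        have := hb r m ⟨(t : ℕ), h⟩ ⟨0, Nat.succ_pos m⟩
        simpa [← ht] using this
      simpa using inv_mem this
    · have ht : t = Fin.last r := by
        apply Fin.ext; have := t.isLt; simp; omega
      subst ht
      have : (of (Fin.last r) : FreeGroup (Fin (r+1)))⁻¹ * of (Fin.last r) ^ (-(v r m ((of (Fin.last r))⁻¹) : ℤ))
          = of (Fin.last r) ^ (-(1 : ℤ) - (v r m ((of (Fin.last r))⁻¹) : ℤ)) := by group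
      rw [this]
      apply hdvd
      have : ((-(1 : ℤ) - (v r m ((of (Fin.last r))⁻¹) : ℤ) : ℤ) : ZMod (m+1)) = 0 := by
        push_cast
        rw [hcast, MonoidHom.map_inv, φm_a]
        simp
      rwa [ZMod.intCast_zmod_eq_zero_iff_dvd, Nat.cast_add, Nat.cast_one] at this
  | mul x y ihx ihy =>
    have key : x * y * of (Fin.last r) ^ (-(v r m (x * y) : ℤ)) =
        (x * of (Fin.last r) ^ (-(v r m x : ℤ))) *
        (of (Fin.last r) ^ ((v r m x : ℤ)) * (y * of (Fin.last r) ^ (-(v r m y : ℤ))) *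
          of (Fin.last r) ^ (-(v r m x : ℤ))) *
        of (Fin.last r) ^ ((v r m x : ℤ) + (v r m y : ℤ) - (v r m (x * y) : ℤ)) := by
      group
    rw [key]
    refine mul_mem (mul_mem ihx (hconjz r m _ _ ihy)) (hdvd r m _ ?_)
    have : (((v r m x : ℤ) + (v r m y : ℤ) - (v r m (x * y) : ℤ) : ℤ) : ZMod (m+1)) = 0 := by
      push_cast
      rw [hcast, hcast, hcast, MonoidHom.map_mul]
      simp
    rwa [ZMod.intCast_zmod_eq_zero_iff_dvd, Nat.cast_add, Nat.cast_one] at this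

lemma ker_le : (φm r m).ker ≤ R r m := by
  intro g hg
  have hv : v r m g = 0 := by
    rw [MonoidHom.mem_ker] at hg
    rw [v, hg]
    simp
  have := main_mem r m g
  rw [hv] at this
  simpa using this

lemma index_ne_zero : (R r m).index ≠ 0 := by
  have h1 : (R r m).index ∣ (φm r m).ker.index := Subgroup.index_dvd_of_le (ker_le r m)
  have h2 : (φm r m).ker.index ≠ 0 := by
    rw [Subgroup.index_ker]
    have : Nat.card (φm r m).range ≠ 0 := Nat.card_pos.ne'
    exact this
  intro h0
  rw [h0] at h1
  exact h2 (zero_dvd_iff.mp h1)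


lemma exists_subgroup (r m : ℕ) :
    ∃ H : Subgroup (FreeGroup (Fin (r + 1))),
      H.index ≠ 0 ∧ Nonempty (H ≃* FreeGroup (Fin (r * (m + 1) + 1))) := by
  refine ⟨R r m, index_ne_zero r m, ⟨?_⟩⟩
  have e : I r m ≃ Fin (r * (m + 1) + 1) :=
    (Equiv.optionCongr finProdFinEquiv).trans (finSuccEquiv (r * (m + 1))).symm
  exact ((MonoidHom.ofInjective (ψ_injective r m)).symm.trans (FreeGroup.freeGroupCongr e))

lemma transport {G G' : Type} [Group G] [Group G'] (e : G ≃* G') (X : Type) [Group X]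
    (h : ∃ H : Subgroup G, H.index ≠ 0 ∧ Nonempty (H ≃* X)) :
    ∃ H' : Subgroup G', H'.index ≠ 0 ∧ Nonempty (H' ≃* X) := by
  obtain ⟨H, hi, ⟨f⟩⟩ := h
  refine ⟨H.map e.toMonoidHom, ?_, ⟨(MulEquiv.subgroupMap e H).symm.trans f⟩⟩
  have hker : (e.toMonoidHom : G →* G').ker = ⊥ := by
    rw [MonoidHom.ker_eq_bot_iff]; exact e.injective
  have hrange : (e.toMonoidHom : G →* G').range = ⊤ :=
    MonoidHom.range_eq_top_of_surjective _ e.surjective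
  rw [Subgroup.index_map, hker, hrange, sup_bot_eq, Subgroup.index_top, mul_one]
  exact hi


end FGC


/-- For every natural number `k ≥ 2`, the free group on 2 generators contains a
finite-index subgroup isomorphic to the free group on `k` generators; consequently,
free groups of any two finite ranks `≥ 2` are commensurable: they contain isomorphic
finite-index subgroups. -/
theorem free_groups_commensurable :
    (∀ k : ℕ, 2 ≤ k → ∃ H : Subgroup (FreeGroup (Fin 2)),
      H.index ≠ 0 ∧ Nonempty (H ≃* FreeGroup (Fin k))) ∧
    (∀ k l : ℕ, 2 ≤ k → 2 ≤ l →
      ∃ (H : Subgroup (FreeGroup (Fin k))) (K : Subgroup (FreeGroup (Fin l))),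
        H.index ≠ 0 ∧ K.index ≠ 0 ∧ Nonempty (H ≃* K)) := by
  constructor
  · intro k hk
    obtain ⟨k', rfl⟩ : ∃ k', k = k' + 2 := ⟨k - 2, by omega⟩
    have h := FGC.exists_subgroup 1 k'
    have e2 : FreeGroup (Fin (1 + 1)) ≃* FreeGroup (Fin 2) :=
      FreeGroup.freeGroupCongr (finCongr (by norm_num))
    obtain ⟨H, hi, ⟨f⟩⟩ := FGC.transport e2 _ h
    refine ⟨H, hi, ⟨f.trans (FreeGroup.freeGroupCongr (finCongr (by omega)))⟩⟩
  · intro k l hk hl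
    obtain ⟨k', rfl⟩ : ∃ k', k = k' + 2 := ⟨k - 2, by omega⟩
    obtain ⟨l', rfl⟩ : ∃ l', l = l' + 2 := ⟨l - 2, by omega⟩
    have h1 := FGC.exists_subgroup (k' + 1) l'
    have h2 := FGC.exists_subgroup (l' + 1) k'
    obtain ⟨H, hiH, ⟨fH⟩⟩ := h1
    obtain ⟨K, hiK, ⟨fK⟩⟩ := h2
    have bridge : FreeGroup (Fin ((k' + 1) * (l' + 1) + 1)) ≃*
        FreeGroup (Fin ((l' + 1) * (k' + 1) + 1)) :=
      FreeGroup.freeGroupCongr (finCongr (by ring_nf))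
    exact ⟨H, K, hiH, hiK, ⟨fH.trans (bridge.trans fK.symm)⟩⟩
end

section
/- (Nielsen–Schreier index formula) Let k ≥ 1 and let H be a subgroup of the free group on k generators with finite index n. Then H is isomorphic (as a group) to the free group on n·(k−1)+1 generators. -/
/-!
`H` is the vertex group at the coset `H` of the action groupoid of `G = F(k)` on `G ⧸ H`. That
groupoid is free on the Schreier graph, which has `n` vertices and `n * k` arrows. Pulling every
arrow back to the root along a spanning tree (which has `n - 1` arrows) turns the `n * k - (n - 1)`
arrows outside the tree into a free basis of the vertex group.
-/

universe u v

open CategoryTheory Quiver IsFreeGroupoid IsFreeGroupoid.SpanningTree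

namespace Quiver.Arborescence

variable {V : Type u} [Quiver.{v} V] [Arborescence V]

theorem isEmpty_hom_root (a : V) : IsEmpty (a ⟶ Quiver.root V) :=
  ⟨fun f => Path.cons_ne_nil default f (Subsingleton.elim _ _)⟩

theorem isEmpty_hom_of_hom {a b : V} (f : a ⟶ b) : IsEmpty (b ⟶ a) :=
  ⟨fun g => by
    have h := congrArg Path.length
      (Subsingleton.elim (((default : Path (Quiver.root V) a).cons f).cons g) default)
    simp only [Path.length_cons] at h
    omega⟩

theorem total_ext_of_right_eq {e e' : Total V} (h : e.right = e'.right) : e = e' := by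
  obtain ⟨a, b, f⟩ := e
  obtain ⟨a', b', f'⟩ := e'
  cases h
  have hp : (default : Path (Quiver.root V) a).cons f =
      (default : Path (Quiver.root V) a').cons f' :=
    Subsingleton.elim _ _
  cases Path.obj_eq_of_cons_eq_cons hp
  cases Path.hom_heq_of_cons_eq_cons hp
  rfl

theorem exists_total_right_eq {b : V} (hb : b ≠ Quiver.root V) :
    ∃ e : Total V, e.right = b := by
  cases hp : (default : Path (Quiver.root V) b) with
  | nil => exact absurd rfl hb
  | cons _ f => exact ⟨⟨_, _, f⟩, rfl⟩

noncomputable def totalEquivNeRoot : Total V ≃ {b : V // b ≠ Quiver.root V} :=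
  Equiv.ofBijective (fun e => ⟨e.right, fun h => (isEmpty_hom_root e.left).false (h ▸ e.hom)⟩)
    ⟨fun _ _ h => total_ext_of_right_eq (congrArg Subtype.val h),
     fun b => (exists_total_right_eq b.2).imp fun _ h => Subtype.ext h⟩

theorem card_total_add_one [Finite V] : Nat.card (Total V) + 1 = Nat.card V := by
  classical
  rw [Nat.card_congr totalEquivNeRoot, ← Finite.card_option,
    Nat.card_congr (Equiv.optionSubtypeNe _)]

end Quiver.Arborescence

section Symmetrify

variable {V : Type u} [Quiver V] (T : WideSubquiver (Symmetrify V))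

def WideSubquiver.unsymmetrify : Total T → Total V
  | ⟨a, b, ⟨.inl e, _⟩⟩ => ⟨a, b, e⟩
  | ⟨a, b, ⟨.inr e, _⟩⟩ => ⟨b, a, e⟩

theorem WideSubquiver.range_unsymmetrify :
    Set.range T.unsymmetrify = wideSubquiverEquivSetTotal (wideSubquiverSymmetrify T) := by
  ext ⟨a, b, e⟩
  constructor
  · rintro ⟨⟨a, b, ⟨e | e, he⟩⟩, h⟩ <;> cases h
    exacts [Or.inl he, Or.inr he]
  · rintro (he | he)
    exacts [⟨⟨a, b, ⟨_, he⟩⟩, rfl⟩, ⟨⟨b, a, ⟨_, he⟩⟩, rfl⟩]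

variable [Arborescence T]

theorem Quiver.Arborescence.injective_unsymmetrify : Function.Injective T.unsymmetrify := by
  rintro ⟨a, b, ⟨e | e, he⟩⟩ ⟨a', b', ⟨e' | e', he'⟩⟩ h <;>
    obtain ⟨rfl, rfl, ⟨⟩⟩ := Total.mk.inj h
  · rfl
  · exact ((isEmpty_hom_of_hom (show (a : T) ⟶ b from ⟨_, he⟩)).false ⟨_, he'⟩).elim
  · exact ((isEmpty_hom_of_hom (show (a : T) ⟶ b from ⟨_, he⟩)).false ⟨_, he'⟩).elim
  · rfl

theorem Quiver.Arborescence.ncard_wideSubquiverSymmetrify_add_one [Finite V] :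
    (wideSubquiverEquivSetTotal (wideSubquiverSymmetrify T)).ncard + 1 = Nat.card V := by
  have : Finite T := ‹Finite V›
  rw [← T.range_unsymmetrify, Set.ncard_range_of_injective (injective_unsymmetrify T)]
  exact card_total_add_one (V := T)

end Symmetrify

namespace IsFreeGroupoid.SpanningTree

variable {G : Type u} [Groupoid.{u} G] [IsFreeGroupoid G]
  (T : WideSubquiver (Symmetrify <| Generators G)) [Arborescence T]

theorem loopOfHom_root (x : End (show G from root T)) : loopOfHom T x = x := by
  have h : treeHom T (show G from root T) = 𝟙 _ := treeHom_root T
  simp only [loopOfHom, h]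
  erw [IsIso.inv_id, Category.id_comp, Category.comp_id]

variable {T} {X : Type u} [Group X] {F : G ⥤ CategoryTheory.SingleObj X}

theorem map_homOfPath_eq_one
    (hF : ∀ a b (e : a ⟶ b), e ∈ wideSubquiverSymmetrify T a b → F.map (of e) = 1)
    {a : G} (p : Path (root T) a) : F.map (homOfPath T p) = 1 := by
  induction p with
  | nil => exact F.map_id _
  | cons p e ih =>
    erw [homOfPath.eq_2, F.map_comp, SingleObj.comp_as_mul, ih, mul_one]
    rcases e with ⟨e | e, he⟩
    · exact hF _ _ e (Or.inl he)
    · rw [F.map_inv, SingleObj.inv_as_inv, inv_eq_one]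
      exact hF _ _ e (Or.inr he)

theorem map_loopOfHom
    (hF : ∀ a b (e : a ⟶ b), e ∈ wideSubquiverSymmetrify T a b → F.map (of e) = 1)
    {a b : G} (q : a ⟶ b) : F.map (loopOfHom T q) = F.map q := by
  simp only [loopOfHom, treeHom, Functor.map_comp, Functor.map_inv, SingleObj.comp_as_mul,
    SingleObj.inv_as_inv, map_homOfPath_eq_one hF, inv_one, mul_one, one_mul]

-- `endIsFree` only records `IsFreeGroup`; counting the rank needs the basis itself.
variable (T) in
open scoped Classical in
noncomputable def endFreeGroupBasis :
    FreeGroupBasis ((wideSubquiverEquivSetTotal <| wideSubquiverSymmetrify T)ᶜ : Set _)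
      (End (show G from root T)) :=
  FreeGroupBasis.ofUniqueLift _ (fun e => loopOfHom T (of e.val.hom)) fun {X} _ f => by
    let label : Labelling (Generators G) X := fun a b e =>
      if h : e ∈ wideSubquiverSymmetrify T a b then 1 else f ⟨⟨a, b, e⟩, h⟩
    have label_tree a b (e : a ⟶ b) (h : e ∈ wideSubquiverSymmetrify T a b) : label e = 1 :=
      dif_pos h
    have label_off a b (e : a ⟶ b) (h : e ∉ wideSubquiverSymmetrify T a b) :
        label e = f ⟨⟨a, b, e⟩, h⟩ :=
      dif_neg h
    obtain ⟨F, hF, hF_unique⟩ := unique_lift label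
    have hF_tree a b (e : a ⟶ b) (h : e ∈ wideSubquiverSymmetrify T a b) : F.map (of e) = 1 :=
      (hF a b e).trans (label_tree a b e h)
    refine ⟨F.mapEnd _, fun ⟨⟨a, b, e⟩, h⟩ => ?_, fun E hE => ?_⟩
    · change F.map (loopOfHom T (of e)) = _
      rw [← label_off a b e h, ← hF]
      exact map_loopOfHom hF_tree (of e)
    · have hE_lift : functorOfMonoidHom T E = F := hF_unique _ fun a b e => by
        change E (loopOfHom T (of e)) = label e
        by_cases h : e ∈ wideSubquiverSymmetrify T a b
        · rw [label_tree a b e h, loopOfHom_eq_id T e h]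
          exact E.map_one
        · rw [hE ⟨⟨a, b, e⟩, h⟩, label_off a b e h]
      ext x
      calc E x = (functorOfMonoidHom T E).map x := congrArg E (loopOfHom_root T x).symm
        _ = F.map x := by rw [hE_lift]

end IsFreeGroupoid.SpanningTree

theorem IsFreeGroupoid.exists_freeGroupBasis_end_card_add_card {G : Type u} [Groupoid.{u} G]
    [IsFreeGroupoid G] [IsConnected G] [Finite G] [Finite (Total (Generators G))] (r : G) :
    ∃ (ι : Type u) (_ : FreeGroupBasis ι (End r)),
      Nat.card ι + Nat.card G = Nat.card (Total (Generators G)) + 1 := by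
  have : RootedConnected (show Symmetrify (Generators G) from r) := generators_connected G r
  let T := geodesicSubtree (show Symmetrify (Generators G) from r)
  let tree := wideSubquiverEquivSetTotal (wideSubquiverSymmetrify T)
  have : Finite (Generators G) := ‹Finite G›
  refine ⟨↥treeᶜ, endFreeGroupBasis T, ?_⟩
  have htree : tree.ncard + 1 = Nat.card G := Arborescence.ncard_wideSubquiverSymmetrify_add_one T
  have hcompl := Set.ncard_add_ncard_compl tree
  rw [Nat.card_coe_set_eq]
  omega

noncomputable def CategoryTheory.ActionCategory.totalGeneratorsEquiv {G A : Type u} [Group G]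
    [IsFreeGroup G] [MulAction G A] :
    Total (Generators (ActionCategory G A)) ≃ A × IsFreeGroup.Generators G where
  toFun e := ((show ActionCategory G A from e.left).back, e.hom.1)
  invFun p := ⟨show ActionCategory G A from p.1,
    show ActionCategory G A from (IsFreeGroup.of p.2 • p.1 : A), ⟨p.2, rfl⟩⟩
  left_inv := by
    rintro ⟨⟨⟨⟩, a⟩, ⟨⟨⟩, b⟩, ⟨e, he⟩⟩
    cases he
    rfl
  right_inv _ := rfl

theorem FreeGroupBasis.card_generators_eq {G ι : Type u} [Group G] [IsFreeGroup G]
    (b : FreeGroupBasis ι G) : Nat.card (IsFreeGroup.Generators G) = Nat.card ι :=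
  Nat.card_congr (Equiv.ofFreeGroupEquiv ((IsFreeGroup.toFreeGroup G).symm.trans b.repr))

theorem IsFreeGroup.card_generators_subgroup_add_index {G : Type u} [Group G] [IsFreeGroup G]
    [Finite (IsFreeGroup.Generators G)] (H : Subgroup G) [H.FiniteIndex] :
    Nat.card (IsFreeGroup.Generators H) + H.index =
      H.index * Nat.card (IsFreeGroup.Generators G) + 1 := by
  have : Finite (ActionCategory G (G ⧸ H)) := Finite.of_equiv _ (ActionCategory.objEquiv _ _)
  have : Finite (Total (IsFreeGroupoid.Generators (ActionCategory G (G ⧸ H)))) :=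
    Finite.of_equiv _ ActionCategory.totalGeneratorsEquiv.symm
  -- The `IsConnected` instance of `ActionCategory` is stated for its own category structure,
  -- which is not reducibly the one underlying its groupoid structure.
  obtain ⟨ι, b, hι⟩ := @IsFreeGroupoid.exists_freeGroupBasis_end_card_add_card _ _ _
    (inferInstanceAs (IsConnected (ActionCategory G (G ⧸ H)))) _ _
    (ActionCategory.objEquiv G (G ⧸ H) (1 : G))
  rw [Nat.card_congr (ActionCategory.objEquiv _ _).symm,
    Nat.card_congr ActionCategory.totalGeneratorsEquiv, Nat.card_prod] at hι
  rw [(b.map (ActionCategory.endMulEquivSubgroup H)).card_generators_eq, H.index_eq_card]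
  exact hι

/-- Nielsen–Schreier index formula: a subgroup of index `n` in the free group of
rank `k ≥ 1` is isomorphic to the free group of rank `n * (k - 1) + 1`. -/
theorem nielsen_schreier_index_formula (k n : ℕ) (hk : 1 ≤ k) (hn : 0 < n)
    (H : Subgroup (FreeGroup (Fin k))) (hH : H.index = n) :
    Nonempty (H ≃* FreeGroup (Fin (n * (k - 1) + 1))) := by
  have : H.FiniteIndex := ⟨by omega⟩
  have hk_card : Nat.card (IsFreeGroup.Generators (FreeGroup (Fin k))) = k := by
    rw [(FreeGroupBasis.ofRepr (MulEquiv.refl _)).card_generators_eq, Nat.card_fin]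
  have : Finite (IsFreeGroup.Generators (FreeGroup (Fin k))) :=
    Nat.finite_of_card_ne_zero (by omega)
  have hformula := IsFreeGroup.card_generators_subgroup_add_index H
  have hrank : Nat.card (IsFreeGroup.Generators H) = n * (k - 1) + 1 := by
    have hk_split : n * k = n * (k - 1) + n := by rw [← Nat.mul_add_one, Nat.sub_add_cancel hk]
    rw [hk_card, hH] at hformula
    omega
  have : Finite (IsFreeGroup.Generators H) := Nat.finite_of_card_ne_zero (by omega)
  exact ⟨(IsFreeGroup.toFreeGroup H).trans
    (FreeGroup.freeGroupCongr ((Finite.equivFin _).trans (finCongr hrank)))⟩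
end

section
/- Let G be a finite group and n a positive natural number. Let f : FreeGroup (Option G) →* Multiplicative (ZMod n) be the unique homomorphism sending each generator a_g = FreeGroup.of (some g) (g ∈ G) to the identity and a_* = FreeGroup.of none to Multiplicative.ofAdd 1. Then the kernel of f is generated (as a subgroup) by the set { a_*^k · a_g · a_*^{−k} : g ∈ G, 0 ≤ k < n } ∪ { a_*^n }. -/
/-!
Let `N` be the subgroup generated by these elements. It is normal: conjugation by `a_*` shifts
the exponent `k`, and `a_*^n ∈ N` makes the shift wrap around modulo `n`, while each `a_g` lies in
`N` itself. In `F ⧸ N` every `a_g` is trivial and `a_*^n = 1`, so the quotient map factors through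
`f`, which gives `ker f ≤ N`. The reverse inclusion holds because `f` kills every generator of `N`.
-/

theorem exists_monoidHom_zmod_ofAdd_one {Q : Type*} [Group Q] {n : ℕ} {q : Q} (hq : q ^ n = 1) :
    ∃ φ : Multiplicative (ZMod n) →* Q, φ (Multiplicative.ofAdd 1) = q := by
  let ψ : {ψ : ℤ →+ Additive Q // ψ n = 0} :=
    ⟨zmultiplesHom (Additive Q) (Additive.ofMul q), by simpa [← ofMul_pow] using hq⟩
  refine ⟨AddMonoidHom.toMultiplicativeLeft (ZMod.lift n ψ), ?_⟩
  simpa [ψ] using congrArg Additive.toMul (ZMod.lift_coe n ψ 1)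

namespace FreeGroup

open Subgroup

variable {G : Type} {n : ℕ}

/-- The Schreier generators of the kernel for the transversal `{a_*^k : k < n}`. -/
def schreierSet (G : Type) (n : ℕ) : Set (FreeGroup (Option G)) :=
  {x | ∃ (g : G) (k : ℕ), k < n ∧ x = of none ^ k * of (some g) * (of none ^ k)⁻¹} ∪
    {of none ^ n}

theorem of_none_pow_mem_closure_schreierSet :
    of none ^ n ∈ closure (schreierSet G n) :=
  subset_closure (Or.inr rfl)

theorem conj_of_some_mem_closure_schreierSet {k : ℕ} (hk : k < n) (g : G) :
    of none ^ k * of (some g) * (of none ^ k)⁻¹ ∈ closure (schreierSet G n) :=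
  subset_closure (Or.inl ⟨g, k, hk, rfl⟩)

theorem of_some_mem_closure_schreierSet (hn : 0 < n) (g : G) :
    of (some g) ∈ closure (schreierSet G n) := by
  simpa using conj_of_some_mem_closure_schreierSet hn g

theorem zpow_conj_of_some_mem_closure_schreierSet (hn : 0 < n) (m : ℤ) (g : G) :
    of none ^ m * of (some g) * (of none ^ m)⁻¹ ∈ closure (schreierSet G n) := by
  set t : FreeGroup (Option G) := of none
  set r := (m % n).toNat
  have hr : (r : ℤ) = m % n := Int.toNat_of_nonneg (Int.emod_nonneg m (by omega))
  have hrn : r < n := by have := Int.emod_lt_of_pos m (by omega : (0 : ℤ) < n); omega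
  have hm : t ^ m = (t ^ n) ^ (m / n) * t ^ r := by
    rw [← zpow_natCast t n, ← zpow_mul, ← zpow_natCast t r, ← zpow_add, hr, Int.mul_ediv_add_emod]
  have htn := zpow_mem (of_none_pow_mem_closure_schreierSet (G := G) (n := n)) (m / n)
  have hconj : t ^ m * of (some g) * (t ^ m)⁻¹ =
      (t ^ n) ^ (m / n) * (t ^ r * of (some g) * (t ^ r)⁻¹) * ((t ^ n) ^ (m / n))⁻¹ := by
    rw [hm]; group
  rw [hconj]
  exact mul_mem (mul_mem htn (conj_of_some_mem_closure_schreierSet hrn g)) (inv_mem htn)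

theorem closure_schreierSet_normal (hn : 0 < n) : (closure (schreierSet G n)).Normal := by
  rw [← normalizer_eq_top_iff, eq_top_iff, ← closure_range_of, closure_le]
  rintro _ ⟨_ | g, rfl⟩
  · refine le_normalizer_closure_iff.mpr ?_ (mem_zpowers (of none))
    rintro _ ⟨m, rfl⟩ _ (⟨g, k, -, rfl⟩ | rfl)
    · simpa [zpow_add, mul_assoc] using zpow_conj_of_some_mem_closure_schreierSet hn (m + k) g
    · rw [((Commute.refl (of none)).zpow_left m).pow_right n |>.eq, mul_inv_cancel_right]
      exact of_none_pow_mem_closure_schreierSet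
  · exact le_normalizer (of_some_mem_closure_schreierSet hn g)

variable {f : FreeGroup (Option G) →* Multiplicative (ZMod n)}

theorem closure_schreierSet_le_ker (hf₁ : ∀ g : G, f (of (some g)) = 1)
    (hf₂ : f (of none) = Multiplicative.ofAdd 1) : closure (schreierSet G n) ≤ f.ker := by
  rw [closure_le]
  rintro _ (⟨g, k, -, rfl⟩ | rfl)
  · simp [hf₁]
  · simp [hf₂, ← ofAdd_nsmul]

theorem ker_le_closure_schreierSet (hn : 0 < n) (hf₁ : ∀ g : G, f (of (some g)) = 1)
    (hf₂ : f (of none) = Multiplicative.ofAdd 1) : f.ker ≤ closure (schreierSet G n) := by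
  have := closure_schreierSet_normal (G := G) hn
  obtain ⟨φ, hφ⟩ := exists_monoidHom_zmod_ofAdd_one (n := n)
    (q := QuotientGroup.mk' (closure (schreierSet G n)) (of none)) (by
      rw [← map_pow, QuotientGroup.mk'_apply, QuotientGroup.eq_one_iff]
      exact of_none_pow_mem_closure_schreierSet)
  have hφf : φ.comp f = QuotientGroup.mk' _ := by
    refine ext_hom _ _ ?_
    rintro (_ | g)
    · simp [hf₂, hφ]
    · rw [MonoidHom.comp_apply, hf₁, _root_.map_one, QuotientGroup.mk'_apply, eq_comm,
        QuotientGroup.eq_one_iff]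
      exact of_some_mem_closure_schreierSet hn g
  intro x hx
  rw [← QuotientGroup.eq_one_iff, ← QuotientGroup.mk'_apply, ← hφf, MonoidHom.comp_apply,
    MonoidHom.mem_ker.mp hx, _root_.map_one]

end FreeGroup

theorem kernel_generators_general (G : Type) (n : ℕ) (hn : 0 < n)
    (f : FreeGroup (Option G) →* Multiplicative (ZMod n))
    (hf₁ : ∀ g : G, f (FreeGroup.of (some g)) = 1)
    (hf₂ : f (FreeGroup.of none) = Multiplicative.ofAdd 1) :
    f.ker = Subgroup.closure
      ({ x | ∃ (g : G) (k : ℕ), k < n ∧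
          x = (FreeGroup.of (none : Option G)) ^ k * FreeGroup.of (some g) *
              ((FreeGroup.of (none : Option G)) ^ k)⁻¹ } ∪
        {(FreeGroup.of (none : Option G)) ^ n}) :=
  le_antisymm (FreeGroup.ker_le_closure_schreierSet hn hf₁ hf₂)
    (FreeGroup.closure_schreierSet_le_ker hf₁ hf₂)

/-- Let `G` be a finite group and `n > 0`, and let
`f : FreeGroup (Option G) →* Multiplicative (ZMod n)` send each generator
`a_g = FreeGroup.of (some g)` to `1` and `a_* = FreeGroup.of none` to
`Multiplicative.ofAdd 1`. Then `ker f` is generated by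
`{ a_*^k * a_g * a_*^{-k} : g ∈ G, 0 ≤ k < n } ∪ { a_*^n }`. -/
theorem kernel_generators (G : Type) [Group G] [Finite G] (n : ℕ) (hn : 0 < n)
    (f : FreeGroup (Option G) →* Multiplicative (ZMod n))
    (hf₁ : ∀ g : G, f (FreeGroup.of (some g)) = 1)
    (hf₂ : f (FreeGroup.of none) = Multiplicative.ofAdd 1) :
    f.ker = Subgroup.closure
      ({ x | ∃ (g : G) (k : ℕ), k < n ∧
          x = (FreeGroup.of (none : Option G)) ^ k * FreeGroup.of (some g) *
              ((FreeGroup.of (none : Option G)) ^ k)⁻¹ } ∪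
        {(FreeGroup.of (none : Option G)) ^ n}) :=
  kernel_generators_general G n hn f hf₁ hf₂
end

section
/- Let G be a finite group and n a positive natural number. Let f : FreeGroup (Option G) →* Multiplicative (ZMod n) be the unique homomorphism sending each generator a_g = FreeGroup.of (some g) (g ∈ G) to the identity and a_* = FreeGroup.of none to Multiplicative.ofAdd 1. Then the family of elements of the kernel of f indexed by (Fin n × G) ⊕ Unit, sending (k, g) to a_*^k · a_g · a_*^{−k} and the unit element to a_*^n, is a free basis of the kernel of f. In particular, the kernel of f is a free group of rank n·|G| + 1. -/
open FreeGroup SemidirectProduct Multiplicative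

namespace KFB

variable {G : Type} [Group G] {n : ℕ}

abbrev H (G : Type) (n : ℕ) := FreeGroup ((Fin n × G) ⊕ Unit)

set_option linter.unusedSectionVars false

def X (k : Fin n) (g : G) : H G n := FreeGroup.of (Sum.inl (k, g))
def Y : H G n := FreeGroup.of (Sum.inr ())

lemma X_val_eq {k k' : Fin n} (h : (k : ℕ) = (k' : ℕ)) (g : G) : X k g = X k' g := by
  have : k = k' := Fin.ext h
  rw [this]

def sfun : (Fin n × G) ⊕ Unit → H G n
  | Sum.inl (k, g) =>
      if h : (k : ℕ) + 1 < n then X ⟨(k : ℕ) + 1, h⟩ g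
      else Y * X ⟨0, k.pos⟩ g * Y⁻¹
  | Sum.inr _ => Y

def sifun : (Fin n × G) ⊕ Unit → H G n
  | Sum.inl (k, g) =>
      if h : 0 < (k : ℕ) then X ⟨(k : ℕ) - 1, by have := k.isLt; omega⟩ g
      else Y⁻¹ * X ⟨n - 1, by have := k.pos; omega⟩ g * Y
  | Sum.inr _ => Y

lemma sHom_X (k : Fin n) (g : G) :
    FreeGroup.lift sfun (X k g) = if h : (k : ℕ) + 1 < n then X ⟨(k : ℕ) + 1, h⟩ g
      else Y * X ⟨0, k.pos⟩ g * Y⁻¹ := by simp [X, sfun]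

lemma sHom_Y : FreeGroup.lift sfun (Y : H G n) = Y := by simp [Y, sfun]

lemma siHom_X (k : Fin n) (g : G) :
    FreeGroup.lift sifun (X k g) =
      if h : 0 < (k : ℕ) then X ⟨(k : ℕ) - 1, by have := k.isLt; omega⟩ g
      else Y⁻¹ * X ⟨n - 1, by have := k.pos; omega⟩ g * Y := by simp [X, sifun]

lemma siHom_Y : FreeGroup.lift sifun (Y : H G n) = Y := by simp [Y, sifun]

def σ : MulAut (H G n) :=
  MonoidHom.toMulEquiv (FreeGroup.lift sfun) (FreeGroup.lift sifun)
    (by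
      ext b
      rcases b with ⟨k, g⟩ | ⟨⟩
      · show FreeGroup.lift sifun (FreeGroup.lift sfun (X k g)) = X k g
        have hlt := k.isLt
        rw [sHom_X]
        split_ifs with h
        · rw [siHom_X]
          rw [dif_pos (by simp)]
          exact X_val_eq (by simp) g
        · rw [_root_.map_mul, _root_.map_mul, _root_.map_inv, siHom_X, siHom_Y]
          rw [dif_neg (by simp)]
          have hk : (k : ℕ) = n - 1 := by omega
          have h2 : ∀ x : H G n, Y * (Y⁻¹ * x * Y) * Y⁻¹ = x := by intro x; group
          rw [h2]
          exact X_val_eq (by simp [hk]) g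
      · show FreeGroup.lift sifun (FreeGroup.lift sfun (Y : H G n)) = Y
        rw [sHom_Y, siHom_Y])
    (by
      ext b
      rcases b with ⟨k, g⟩ | ⟨⟩
      · show FreeGroup.lift sfun (FreeGroup.lift sifun (X k g)) = X k g
        have hlt := k.isLt
        rw [siHom_X]
        split_ifs with h
        · rw [sHom_X]
          rw [dif_pos (by simp; omega)]
          exact X_val_eq (by simp; omega) g
        · rw [_root_.map_mul, _root_.map_mul, _root_.map_inv, sHom_X, sHom_Y]
          rw [dif_neg (by simp; omega)]
          have hk : (k : ℕ) = 0 := by omega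
          have h2 : ∀ x : H G n, Y⁻¹ * (Y * x * Y⁻¹) * Y = x := by intro x; group
          rw [h2]
          exact X_val_eq (by simp [hk]) g
      · show FreeGroup.lift sfun (FreeGroup.lift sifun (Y : H G n)) = Y
        rw [siHom_Y, sHom_Y])

lemma σ_X (k : Fin n) (g : G) :
    σ (X k g) = if h : (k : ℕ) + 1 < n then X ⟨(k : ℕ) + 1, h⟩ g
      else Y * X ⟨0, k.pos⟩ g * Y⁻¹ := sHom_X k g

lemma σ_Y : σ (Y : H G n) = Y := sHom_Y

lemma σ_pow_X (j : ℕ) : ∀ (k k' : Fin n), ((k' : ℕ) = (k : ℕ) + j) → ∀ g : G,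
    (σ ^ j : MulAut (H G n)) (X k g) = X k' g := by
  induction j with
  | zero =>
    intro k k' h g
    rw [pow_zero]
    exact (X_val_eq (by omega) g)
  | succ j ih =>
    intro k k' h g
    have hk1 : (k : ℕ) + 1 < n := by have := k'.isLt; omega
    rw [pow_succ]
    show (σ ^ j : MulAut (H G n)) (σ (X k g)) = X k' g
    rw [σ_X, dif_pos hk1]
    exact ih ⟨(k : ℕ) + 1, hk1⟩ k' (by simp; omega) g

lemma σ_pow_Y (j : ℕ) : (σ ^ j : MulAut (H G n)) Y = Y := by
  induction j with
  | zero => rw [pow_zero]; rfl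
  | succ j ih =>
    rw [pow_succ]
    show (σ ^ j : MulAut (H G n)) (σ Y) = Y
    rw [σ_Y, ih]

lemma σ_zpow_Y (m : ℤ) : (σ ^ m : MulAut (H G n)) Y = Y := by
  cases m with
  | ofNat j => rw [Int.ofNat_eq_coe, zpow_natCast]; exact σ_pow_Y j
  | negSucc j =>
    have h := σ_pow_Y (n := n) (G := G) (j + 1)
    rw [zpow_negSucc]
    conv_lhs => rw [← h]
    simp

lemma σ_pow_n : (σ ^ n : MulAut (H G n)) = MulAut.conj (Y : H G n) := by
  apply MulEquiv.toMonoidHom_injective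
  ext b
  rcases b with ⟨k, g⟩ | ⟨⟩
  · show (σ ^ n : MulAut (H G n)) (X k g) = MulAut.conj (Y : H G n) (X k g)
    have hk := k.isLt
    have e1 : (σ ^ n : MulAut (H G n)) = σ ^ (k : ℕ) * σ * σ ^ (n - 1 - (k : ℕ)) := by
      rw [← pow_succ, ← pow_add]
      congr 1
      omega
    rw [e1]
    show (σ ^ (k : ℕ) : MulAut (H G n)) (σ ((σ ^ (n - 1 - (k : ℕ)) : MulAut (H G n)) (X k g)))
      = MulAut.conj (Y : H G n) (X k g)
    rw [σ_pow_X (n - 1 - (k : ℕ)) k ⟨n - 1, by omega⟩ (by simp; omega) g]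
    rw [σ_X, dif_neg (by simp; omega)]
    rw [_root_.map_mul, _root_.map_mul, _root_.map_inv, σ_pow_Y,
      σ_pow_X (k : ℕ) ⟨0, k.pos⟩ k (by simp) g]
    rfl
  · show (σ ^ n : MulAut (H G n)) Y = MulAut.conj (Y : H G n) Y
    rw [σ_pow_Y, MulAut.conj_apply, mul_inv_cancel_right]

def t (G : Type) : FreeGroup (Option G) := FreeGroup.of none
def a {G : Type} (g : G) : FreeGroup (Option G) := FreeGroup.of (some g)

def phifun : (Fin n × G) ⊕ Unit → FreeGroup (Option G)
  | Sum.inl (k, g) => t G ^ (k : ℕ) * a g * (t G ^ (k : ℕ))⁻¹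
  | Sum.inr _ => t G ^ n

def phi : H G n →* FreeGroup (Option G) := FreeGroup.lift phifun

lemma phi_X (k : Fin n) (g : G) :
    phi (X k g) = t G ^ (k : ℕ) * a g * (t G ^ (k : ℕ))⁻¹ := by simp [phi, X, phifun]

lemma phi_Y : phi (Y : H G n) = t G ^ n := by simp [phi, Y, phifun]

lemma phi_σ (x : H G n) : phi (σ x) = t G * phi x * (t G)⁻¹ := by
  have key : phi.comp (σ : MulAut (H G n)).toMonoidHom
      = (MulAut.conj (t G)).toMonoidHom.comp phi := by
    ext b
    rcases b with ⟨k, g⟩ | ⟨⟩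
    · show phi (σ (X k g)) = MulAut.conj (t G) (phi (X k g))
      have hlt := k.isLt
      rw [σ_X, MulAut.conj_apply, phi_X]
      split_ifs with h
      · rw [phi_X]
        simp only [Fin.val_mk]
        group
      · rw [_root_.map_mul, _root_.map_mul, _root_.map_inv, phi_Y, phi_X]
        simp only [Fin.val_mk]
        obtain ⟨kv, hkv⟩ : ∃ kv : ℕ, (k : ℕ) = kv := ⟨_, rfl⟩
        rw [hkv]
        rw [show n = kv + 1 from by omega]
        group
    · show phi (σ (Y : H G n)) = MulAut.conj (t G) (phi (Y : H G n))
      rw [σ_Y, MulAut.conj_apply, phi_Y]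
      group
  exact DFunLike.congr_fun key x

lemma phi_σ_inv (x : H G n) : phi (σ⁻¹ x) = (t G)⁻¹ * phi x * t G := by
  have h := phi_σ ((σ⁻¹ : MulAut (H G n)) x)
  have h2 : σ ((σ⁻¹ : MulAut (H G n)) x) = x := by
    simp
  rw [h2] at h
  rw [h]
  group

lemma phi_σ_zpow (m : ℤ) : ∀ x : H G n,
    phi ((σ ^ m : MulAut (H G n)) x) = t G ^ m * phi x * (t G ^ m)⁻¹ := by
  induction m using Int.induction_on with
  | zero => intro x; simp
  | succ j ih =>
    intro x
    rw [zpow_add_one]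
    show phi ((σ ^ (j : ℤ) : MulAut (H G n)) (σ x)) = _
    rw [ih (σ x), phi_σ x]
    group
  | pred j ih =>
    intro x
    rw [zpow_sub_one]
    show phi ((σ ^ (-j : ℤ) : MulAut (H G n)) (σ⁻¹ x)) = _
    rw [ih (σ⁻¹ x), phi_σ_inv x]
    group

def act : Multiplicative ℤ →* MulAut (H G n) := zpowersHom _ σ

abbrev K' (G : Type) [Group G] (n : ℕ) := SemidirectProduct (H G n) (Multiplicative ℤ) act

lemma act_apply (m : Multiplicative ℤ) :
    (act m : MulAut (H G n)) = σ ^ (Multiplicative.toAdd m) := by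
  simp [act]

lemma compat : ∀ m : Multiplicative ℤ,
    phi.comp ((act m : MulAut (H G n))).toMonoidHom
      = (MulAut.conj (zpowersHom (FreeGroup (Option G)) (t G) m)).toMonoidHom.comp phi := by
  intro m
  apply MonoidHom.ext
  intro x
  show phi ((act m : MulAut (H G n)) x) = MulAut.conj (zpowersHom _ (t G) m) (phi x)
  rw [act_apply, phi_σ_zpow, MulAut.conj_apply]
  simp

def mu : K' G n →* FreeGroup (Option G) :=
  SemidirectProduct.lift phi (zpowersHom _ (t G)) compat

lemma mu_inl (x : H G n) : mu (inl x) = phi x := by simp [mu]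

lemma mu_inr (m : Multiplicative ℤ) : mu (inr m : K' G n) = t G ^ (Multiplicative.toAdd m) := by
  simp [mu]

def Psifun (hn : 0 < n) : Option G → K' G n
  | none => inr (Multiplicative.ofAdd 1)
  | some g => inl (X ⟨0, hn⟩ g)

def Psi (hn : 0 < n) : FreeGroup (Option G) →* K' G n := FreeGroup.lift (Psifun hn)

lemma mu_Psi (hn : 0 < n) (w : FreeGroup (Option G)) : mu (Psi hn w) = w := by
  have key : (mu : K' G n →* FreeGroup (Option G)).comp (Psi hn)
      = MonoidHom.id (FreeGroup (Option G)) := by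
    ext o
    rcases o with _ | g
    · show mu (Psi hn (FreeGroup.of none)) = FreeGroup.of none
      rw [show Psi hn (FreeGroup.of none) = inr (Multiplicative.ofAdd 1) from by
        simp [Psi, Psifun]]
      rw [mu_inr]
      simp [t]
    · show mu (Psi hn (FreeGroup.of (some g))) = FreeGroup.of (some g)
      rw [show Psi hn (FreeGroup.of (some g)) = inl (X ⟨0, hn⟩ g) from by
        simp [Psi, Psifun]]
      rw [mu_inl, phi_X]
      simp [a]
  exact DFunLike.congr_fun key w

lemma σ_zpow_neg_n (x : H G n) : (σ ^ (-(n : ℤ)) : MulAut (H G n)) x = Y⁻¹ * x * Y := by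
  have h : (σ ^ (-(n : ℤ)) : MulAut (H G n)) = (MulAut.conj (Y : H G n))⁻¹ := by
    rw [zpow_neg, zpow_natCast, σ_pow_n]
  rw [h, ← _root_.map_inv (MulAut.conj : H G n →* MulAut (H G n)) Y, MulAut.conj_apply, inv_inv]

def z : K' G n := ⟨Y, Multiplicative.ofAdd (-(n : ℤ))⟩

lemma z_center : (z : K' G n) ∈ Subgroup.center (K' G n) := by
  rw [Subgroup.mem_center_iff]
  intro g
  apply SemidirectProduct.ext
  · show g.left * (act g.right) (z : K' G n).left = (z : K' G n).left * (act (z : K' G n).right) g.left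
    show g.left * (act g.right) (Y : H G n) = Y * (act (Multiplicative.ofAdd (-(n : ℤ)))) g.left
    rw [act_apply, act_apply, σ_zpow_Y]
    rw [show (Multiplicative.toAdd (Multiplicative.ofAdd (-(n : ℤ)))) = -(n : ℤ) from rfl]
    rw [σ_zpow_neg_n]
    group
  · show g.right * (z : K' G n).right = (z : K' G n).right * g.right
    exact mul_comm _ _

instance zsub_normal : (Subgroup.zpowers (z : K' G n)).Normal := by
  constructor
  intro x hx g
  obtain ⟨m, rfl⟩ := Subgroup.mem_zpowers_iff.mp hx
  have hc : (z : K' G n) ^ m ∈ Subgroup.center (K' G n) :=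
    Subgroup.zpow_mem _ z_center m
  rw [Subgroup.mem_center_iff] at hc
  rw [hc g, mul_inv_cancel_right]
  exact Subgroup.zpow_mem _ (Subgroup.mem_zpowers _) m

lemma rightHom_z : rightHom (z : K' G n) = Multiplicative.ofAdd (-(n : ℤ)) := rfl

lemma pi_inl_inj (hn : 0 < n) :
    Function.Injective
      ((QuotientGroup.mk' (Subgroup.zpowers (z : K' G n))).comp inl) := by
  rw [injective_iff_map_eq_one]
  intro h hh
  have h1 : (inl h : K' G n) ∈ Subgroup.zpowers (z : K' G n) := by
    rwa [MonoidHom.comp_apply, QuotientGroup.mk'_apply, QuotientGroup.eq_one_iff] at hh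
  obtain ⟨m, hm⟩ := Subgroup.mem_zpowers_iff.mp h1
  have h2 : rightHom ((z : K' G n) ^ m) = rightHom (inl h : K' G n) := by rw [hm]
  rw [map_zpow, rightHom_z, rightHom_inl] at h2
  have h3 : (-(n : ℤ)) * m = 0 := by
    have := congrArg Multiplicative.toAdd h2
    simpa [← ofAdd_zsmul] using this
  have hm0 : m = 0 := by
    rcases mul_eq_zero.mp h3 with h | h
    · exfalso; omega
    · exact h
  rw [hm0, zpow_zero] at hm
  exact inl_injective hm.symm

lemma Psi_phi_X (hn : 0 < n) (k : Fin n) (g : G) :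
    Psi hn (phi (X k g)) = inl (X k g) := by
  rw [phi_X]
  have h1 : Psi hn (t G) = inr (Multiplicative.ofAdd 1) := by simp [Psi, Psifun, t]
  have h2 : Psi hn (a g) = inl (X ⟨0, hn⟩ g) := by simp [Psi, Psifun, a]
  rw [_root_.map_mul, _root_.map_mul, _root_.map_inv, _root_.map_pow, h1, h2, ← _root_.map_pow]
  have h3 : (Multiplicative.ofAdd (1 : ℤ)) ^ (k : ℕ) = Multiplicative.ofAdd ((k : ℕ) : ℤ) := by
    rw [← ofAdd_nsmul]; simp
  rw [h3, ← _root_.map_inv (inr : Multiplicative ℤ →* K' G n), ← inl_aut]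
  congr 1
  rw [act_apply]
  rw [show Multiplicative.toAdd (Multiplicative.ofAdd ((k : ℕ) : ℤ)) = ((k : ℕ) : ℤ) from rfl]
  rw [zpow_natCast]
  exact σ_pow_X (k : ℕ) ⟨0, hn⟩ k (by simp) g

lemma Psi_phi_Y (hn : 0 < n) :
    Psi hn (phi (Y : H G n)) = inr (Multiplicative.ofAdd (n : ℤ)) := by
  rw [phi_Y]
  have h1 : Psi hn (t G) = inr (Multiplicative.ofAdd 1) := by simp [Psi, Psifun, t]
  rw [_root_.map_pow, h1, ← _root_.map_pow]
  congr 1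
  rw [← ofAdd_nsmul]; simp

lemma z_mk : (z : K' G n) = inl Y * inr (Multiplicative.ofAdd (-(n : ℤ))) :=
  mk_eq_inl_mul_inr _ _

lemma z_inv_eq :
    (inl (Y : H G n))⁻¹ * inr (Multiplicative.ofAdd (n : ℤ)) = (z : K' G n)⁻¹ := by
  apply eq_inv_of_mul_eq_one_right
  have hc := Subgroup.mem_center_iff.mp (z_center (G := G) (n := n))
  have hadd : (Multiplicative.ofAdd (-(n : ℤ))) * Multiplicative.ofAdd (n : ℤ) = 1 := by
    simp [← ofAdd_add]
  rw [← mul_assoc, ← hc, z_mk, inv_mul_cancel_left, ← _root_.map_mul, hadd, _root_.map_one]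

lemma z_eq' : (z : K' G n) = (inr (Multiplicative.ofAdd (n : ℤ)))⁻¹ * inl Y := by
  have h := congrArg (·⁻¹) (z_inv_eq (G := G) (n := n))
  simp only [mul_inv_rev, inv_inv] at h
  exact h.symm

lemma phi_injective (hn : 0 < n) : Function.Injective (phi : H G n →* FreeGroup (Option G)) := by
  set Pi := QuotientGroup.mk' (Subgroup.zpowers (z : K' G n)) with hPi
  have key : (Pi.comp (Psi hn)).comp phi = Pi.comp inl := by
    ext b
    rcases b with ⟨k, g⟩ | ⟨⟩
    · show Pi (Psi hn (phi (X k g))) = Pi (inl (X k g))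
      rw [Psi_phi_X hn k g]
    · show Pi (Psi hn (phi (Y : H G n))) = Pi (inl (Y : H G n))
      rw [Psi_phi_Y hn]
      rw [QuotientGroup.mk'_apply, QuotientGroup.mk'_apply, QuotientGroup.eq]
      exact ⟨1, by show (z : K' G n) ^ (1 : ℤ) = _; rw [zpow_one]; exact z_eq'⟩
  have h2 : Function.Injective (⇑(Pi.comp (Psi hn)) ∘ ⇑(phi : H G n →* FreeGroup (Option G))) := by
    rw [← MonoidHom.coe_comp, key]
    exact pi_inl_inj hn
  exact h2.of_comp

end KFB

open KFB

/-- Let `G` be a finite group and `n > 0`, and let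
`f : FreeGroup (Option G) →* Multiplicative (ZMod n)` send each generator
`a_g = FreeGroup.of (some g)` to `1` and `a_* = FreeGroup.of none` to
`Multiplicative.ofAdd 1`. Then the family indexed by `(Fin n × G) ⊕ Unit` sending
`(k, g)` to `a_*^k * a_g * a_*^{-k}` and the unit element to `a_*^n` is a free basis
of `ker f`; in particular `ker f` is free of rank `n * |G| + 1`. -/
theorem kernel_free_basis (G : Type) [Group G] [Finite G] (n : ℕ) (hn : 0 < n)
    (f : FreeGroup (Option G) →* Multiplicative (ZMod n))
    (hf₁ : ∀ g : G, f (FreeGroup.of (some g)) = 1)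
    (hf₂ : f (FreeGroup.of none) = Multiplicative.ofAdd 1) :
    (∃ b : FreeGroupBasis ((Fin n × G) ⊕ Unit) f.ker,
      (∀ (k : Fin n) (g : G),
        (b (Sum.inl (k, g)) : FreeGroup (Option G)) =
          (FreeGroup.of (none : Option G)) ^ (k : ℕ) * FreeGroup.of (some g) *
            ((FreeGroup.of (none : Option G)) ^ (k : ℕ))⁻¹) ∧
      (b (Sum.inr ()) : FreeGroup (Option G)) =
        (FreeGroup.of (none : Option G)) ^ n) ∧
    Nonempty (f.ker ≃* FreeGroup (Fin (n * Nat.card G + 1))) := by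
  classical
  -- `phi` lands in the kernel of `f`
  have hco : f.comp (phi : H G n →* FreeGroup (Option G)) = 1 := by
    ext b
    rcases b with ⟨k, g⟩ | ⟨⟩
    · show f (phi (X k g)) = 1
      rw [phi_X, _root_.map_mul, _root_.map_mul, _root_.map_inv, _root_.map_pow]
      rw [show f (t G) = Multiplicative.ofAdd 1 from hf₂,
        show f (a g) = 1 from hf₁ g]
      group
    · show f (phi (Y : H G n)) = 1
      rw [phi_Y, _root_.map_pow, show f (t G) = Multiplicative.ofAdd 1 from hf₂]
      rw [← ofAdd_nsmul]
      simp
  have hker : ∀ x : H G n, phi x ∈ f.ker := by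
    intro x
    have := DFunLike.congr_fun hco x
    simpa [MonoidHom.mem_ker] using this
  -- surjectivity onto the kernel
  have hsurj : ∀ w : FreeGroup (Option G), w ∈ f.ker → ∃ x : H G n, phi x = w := by
    intro w hw
    have hfF : f = (AddMonoidHom.toMultiplicative (Int.castAddHom (ZMod n))).comp
        (SemidirectProduct.rightHom.comp (Psi hn)) := by
      ext o
      rcases o with _ | g
      · show f (FreeGroup.of none) = _
        rw [hf₂]
        simp only [MonoidHom.comp_apply]
        rw [show Psi hn (FreeGroup.of (none : Option G))
            = SemidirectProduct.inr (Multiplicative.ofAdd 1) from by simp [Psi, Psifun]]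
        simp
        rfl
      · show f (FreeGroup.of (some g)) = _
        rw [hf₁ g]
        simp only [MonoidHom.comp_apply]
        rw [show Psi hn (FreeGroup.of (some g))
            = SemidirectProduct.inl (X ⟨0, hn⟩ g) from by simp [Psi, Psifun]]
        simp
        rfl
    have hw1 : f w = 1 := hw
    rw [hfF] at hw1
    have hdvd : (n : ℤ) ∣ Multiplicative.toAdd (SemidirectProduct.rightHom (Psi hn w)) := by
      rw [← ZMod.intCast_zmod_eq_zero_iff_dvd]
      have := congrArg Multiplicative.toAdd hw1
      simpa using this
    obtain ⟨q, hq⟩ := hdvd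
    refine ⟨(Psi hn w).left * Y ^ q, ?_⟩
    have hwmu : w = phi ((Psi hn w).left)
        * t G ^ (Multiplicative.toAdd (SemidirectProduct.rightHom (Psi hn w))) := by
      conv_lhs => rw [show w = mu (Psi hn w) from (mu_Psi hn w).symm,
        ← SemidirectProduct.inl_left_mul_inr_right (Psi hn w)]
      rw [_root_.map_mul, mu_inl, mu_inr]
      rfl
    rw [_root_.map_mul, _root_.map_zpow, phi_Y]
    conv_rhs => rw [hwmu]
    congr 1
    rw [hq, zpow_mul, zpow_natCast]
  -- the basis
  let phi' : H G n →* f.ker := phi.codRestrict f.ker hker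
  have hbij : Function.Bijective phi' := by
    constructor
    · intro x y hxy
      exact phi_injective hn (congrArg Subtype.val hxy)
    · rintro ⟨w, hw⟩
      obtain ⟨x, hx⟩ := hsurj w hw
      exact ⟨x, Subtype.ext hx⟩
  let e : H G n ≃* f.ker := MulEquiv.ofBijective phi' hbij
  have hb : ∀ i, (FreeGroupBasis.ofRepr e.symm) i = e (FreeGroup.of i) := by
    intro i
    show e.symm.symm (FreeGroup.of i) = e (FreeGroup.of i)
    rw [MulEquiv.symm_symm]
  refine ⟨⟨FreeGroupBasis.ofRepr e.symm, ?_, ?_⟩, ?_⟩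
  · intro k g
    rw [hb]
    show phi (FreeGroup.of (Sum.inl (k, g))) = _
    rw [show FreeGroup.of (Sum.inl (k, g)) = X k g from rfl, phi_X]
    rfl
  · rw [hb]
    show phi (FreeGroup.of (Sum.inr ())) = _
    rw [show FreeGroup.of (Sum.inr ()) = (Y : H G n) from rfl, phi_Y]
    rfl
  · haveI := Fintype.ofFinite G
    refine ⟨e.symm.trans (FreeGroup.freeGroupCongr (Fintype.equivFinOfCardEq ?_))⟩
    simp [Nat.card_eq_fintype_card, mul_comm]
end

section
/- Let G be a finite group and n a positive natural number. There is a group homomorphism Φ : G → MulAut (FreeGroup (Option G)) where Φ(g) is the automorphism induced by the map on generators sending some h to some (g·h) and none to none; Φ is injective. Moreover, letting f : FreeGroup (Option G) →* Multiplicative (ZMod n) be the unique homomorphism sending each a_g = FreeGroup.of (some g) to the identity and a_* = FreeGroup.of none to Multiplicative.ofAdd 1, every Φ(g) maps the kernel of f onto itself, and on the elements a_*^k · a_h · a_*^{−k} (h ∈ G, 0 ≤ k < n) and a_*^n of the kernel it acts by Φ(g)(a_*^k · a_h · a_*^{−k}) = a_*^k · a_{g·h} · a_*^{−k} and Φ(g)(a_*^n)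 = a_*^n. -/
/-- Let `G` be a finite group and `n > 0`, and let
`f : FreeGroup (Option G) →* Multiplicative (ZMod n)` send each generator
`a_g = FreeGroup.of (some g)` to `1` and `a_* = FreeGroup.of none` to
`Multiplicative.ofAdd 1`. There is an injective homomorphism
`Φ : G →* MulAut (FreeGroup (Option G))` where `Φ g` is induced by
`some h ↦ some (g * h)`, `none ↦ none`; each `Φ g` maps `ker f` onto itself, and on
the listed generators of `ker f` it acts by
`Φ g (a_*^k * a_h * a_*^{-k}) = a_*^k * a_{g*h} * a_*^{-k}` and `Φ g (a_*^n) = a_*^n`. -/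
theorem left_multiplication_action_on_kernel (G : Type) [Group G] [Finite G]
    (n : ℕ) (hn : 0 < n)
    (f : FreeGroup (Option G) →* Multiplicative (ZMod n))
    (hf₁ : ∀ g : G, f (FreeGroup.of (some g)) = 1)
    (hf₂ : f (FreeGroup.of none) = Multiplicative.ofAdd 1) :
    ∃ Φ : G →* MulAut (FreeGroup (Option G)),
      Function.Injective Φ ∧
      (∀ g h : G, Φ g (FreeGroup.of (some h)) = FreeGroup.of (some (g * h))) ∧
      (∀ g : G, Φ g (FreeGroup.of (none : Option G)) = FreeGroup.of (none : Option G)) ∧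
      (∀ g : G, f.ker.map (Φ g).toMonoidHom = f.ker) ∧
      (∀ (g h : G) (k : ℕ), k < n →
        Φ g ((FreeGroup.of (none : Option G)) ^ k * FreeGroup.of (some h) *
              ((FreeGroup.of (none : Option G)) ^ k)⁻¹) =
          (FreeGroup.of (none : Option G)) ^ k * FreeGroup.of (some (g * h)) *
            ((FreeGroup.of (none : Option G)) ^ k)⁻¹) ∧
      (∀ g : G, Φ g ((FreeGroup.of (none : Option G)) ^ n) =
        (FreeGroup.of (none : Option G)) ^ n) := by
  classical
  set Φ : G →* MulAut (FreeGroup (Option G)) :=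
    { toFun := fun g => FreeGroup.freeGroupCongr ((Equiv.mulLeft g).optionCongr)
      map_one' := by
        ext x
        simp
      map_mul' := by
        intro g h
        ext x
        induction x using FreeGroup.induction_on with
        | C1 => simp
        | of y => cases y <;> (show FreeGroup.map _ (FreeGroup.of _) = FreeGroup.map _ (FreeGroup.map _ (FreeGroup.of _)); simp [mul_assoc])
        | inv_of y ih => simp only [map_inv] at *; rw [ih]
        | mul y z ihy ihz => simp only [map_mul] at *; rw [ihy, ihz] } with hΦ
  have hsome : ∀ g h : G, Φ g (FreeGroup.of (some h)) = FreeGroup.of (some (g * h)) := by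
    intro g h; simp [hΦ]
  have hnone : ∀ g : G, Φ g (FreeGroup.of (none : Option G)) =
      FreeGroup.of (none : Option G) := by
    intro g; simp [hΦ]
  have hfΦ : ∀ (g : G) (x : FreeGroup (Option G)), f ((Φ g) x) = f x := by
    intro g x
    have : f.comp (Φ g).toMonoidHom = f := by
      apply FreeGroup.ext_hom
      intro y
      cases y with
      | none => simp [hnone g]
      | some h => simp [hsome g, hf₁]
    calc f ((Φ g) x) = f.comp (Φ g).toMonoidHom x := rfl
      _ = f x := by rw [this]
  refine ⟨Φ, ?_, hsome, hnone, ?_, ?_, ?_⟩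
  · intro g h hgh
    have := congrArg (fun e : MulAut (FreeGroup (Option G)) => e (FreeGroup.of (some 1))) hgh
    simp only [hsome] at this
    simpa using FreeGroup.of_injective this
  · intro g
    apply le_antisymm
    · rintro x ⟨y, hy, rfl⟩
      simp only [MonoidHom.mem_ker] at hy ⊢
      simpa [hfΦ] using hy
    · intro x hx
      refine ⟨(Φ g)⁻¹ x, ?_, by simp⟩
      have hm : (Φ g)⁻¹ x = (Φ g⁻¹) x := by rw [map_inv]
      rw [hm]
      simp only [SetLike.mem_coe, MonoidHom.mem_ker, hfΦ]
      exact hx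
  · intro g h k _
    simp [map_mul, map_pow, map_inv, hsome, hnone]
  · intro g
    simp [map_pow, hnone]
end

section
/- (Algebraic core of the construction lemma) Let G be a finite group and let n be the index of the image of the left regular representation ℓ : G → Equiv.Perm G (so n = |G|! / |G|). Let f : FreeGroup (Option G) →* Multiplicative (ZMod n) be the unique homomorphism sending each a_g = FreeGroup.of (some g) to the identity and a_* = FreeGroup.of none to Multiplicative.ofAdd 1, and let K = ker f, a finite-index subgroup of FreeGroup (Option G). Let Φ : G → MulAut (FreeGroup (Option G)) be the action where Φ(g) sends generator some h to some (g·h) and none to none, and let Ψ : Equiv.Perm G → MulAut (FreeGroup (Option (Equiv.Perm G))) be the action where Ψ(σ) sends generator some τ to some (σ·τ) and none to none. Then there exists a group isomorphism ψ : K ≃* FreeGroup (Option (Equiv.Perm G)) such that for every g ∈ G and every x ∈ K, ψ (Φ(g)(x)) = Ψ(ℓ(g)) (ψ x). -/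
open FreeGroup SemidirectProduct Multiplicative

namespace CLCore
variable {G S : Type}

def sAut (G : Type) (k : ℤ) : MulAut (FreeGroup (ℤ × G)) :=
  FreeGroup.freeGroupCongr ((Equiv.addRight k).prodCongr (Equiv.refl G))

@[simp] lemma sAut_of (k i : ℤ) (g : G) :
    sAut G k (FreeGroup.of (i, g)) = FreeGroup.of (i + k, g) := by
  simp [sAut, FreeGroup.freeGroupCongr_apply]

lemma sAut_zero : sAut G 0 = 1 := by
  apply MulEquiv.toMonoidHom_injective
  apply FreeGroup.ext_hom
  rintro ⟨i, g⟩
  simp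

lemma sAut_add (j k : ℤ) : sAut G (j + k) = sAut G j * sAut G k := by
  apply MulEquiv.toMonoidHom_injective
  apply FreeGroup.ext_hom
  rintro ⟨i, g⟩
  show sAut G (j+k) (FreeGroup.of (i,g)) = sAut G j (sAut G k (FreeGroup.of (i,g)))
  rw [sAut_of, sAut_of, sAut_of]; ring_nf

def φS (G : Type) (d : ℕ) : Multiplicative ℤ →* MulAut (FreeGroup (ℤ × G)) where
  toFun z := sAut G (d * z.toAdd)
  map_one' := by simpa using sAut_zero
  map_mul' a b := by
    show sAut G (↑d * toAdd (a*b)) = _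
    rw [← sAut_add, toAdd_mul, mul_add]

@[simp] lemma φS_of (d : ℕ) (z : Multiplicative ℤ) (i : ℤ) (g : G) :
    φS G d z (FreeGroup.of (i, g)) = FreeGroup.of (i + d * z.toAdd, g) := by
  simp [φS]

abbrev PP (G : Type) (d : ℕ) := FreeGroup (ℤ × G) ⋊[φS G d] Multiplicative ℤ

/-- The isomorphism FreeGroup (Option G) → PP G 1 -/
def Θ (G : Type) : FreeGroup (Option G) →* PP G 1 :=
  FreeGroup.lift fun o => o.elim (inr (ofAdd 1)) (fun g => inl (FreeGroup.of (0, g)))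

@[simp] lemma Θ_none : Θ G (FreeGroup.of none) = inr (ofAdd 1) := FreeGroup.lift_apply_of
@[simp] lemma Θ_some (g : G) : Θ G (FreeGroup.of (some g)) = inl (FreeGroup.of (0, g)) :=
  FreeGroup.lift_apply_of

def EM (G : Type) : FreeGroup (ℤ × G) →* FreeGroup (Option G) :=
  FreeGroup.lift fun p =>
    (FreeGroup.of (none : Option G)) ^ p.1 * FreeGroup.of (some p.2) *
      (FreeGroup.of (none : Option G)) ^ (-p.1)

@[simp] lemma EM_of (i : ℤ) (g : G) :
    EM G (FreeGroup.of (i, g)) =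
      (FreeGroup.of (none : Option G)) ^ i * FreeGroup.of (some g) *
        (FreeGroup.of (none : Option G)) ^ (-i) := FreeGroup.lift_apply_of

/-- inverse of Θ -/
def EE (G : Type) : PP G 1 →* FreeGroup (Option G) :=
  SemidirectProduct.lift (EM G) (zpowersHom _ (FreeGroup.of (none : Option G))) (by
    intro z
    apply FreeGroup.ext_hom
    rintro ⟨i, g⟩
    show EM G (φS G 1 z (FreeGroup.of (i,g))) = _ * EM G (FreeGroup.of (i,g)) * _
    rw [φS_of, EM_of, EM_of]
    simp only [MulAut.conj_apply, zpowersHom_apply, Nat.cast_one, one_mul]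
    group)

@[simp] lemma EE_inl (m : FreeGroup (ℤ × G)) : EE G (inl m) = EM G m := lift_inl _ _ _ _
@[simp] lemma EE_inr (z : Multiplicative ℤ) :
    EE G (inr z) = (FreeGroup.of (none : Option G)) ^ z.toAdd := lift_inr _ _ _ _

lemma EE_Θ : (EE G).comp (Θ G) = MonoidHom.id _ := by
  apply FreeGroup.ext_hom
  rintro (_ | g) <;> simp

lemma Θ_EE : (Θ G).comp (EE G) = MonoidHom.id _ := by
  apply SemidirectProduct.hom_ext
  · apply FreeGroup.ext_hom
    rintro ⟨i, g⟩
    simp only [MonoidHom.comp_apply, MonoidHom.id_apply, EE_inl, EM_of]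
    rw [_root_.map_mul, _root_.map_mul, _root_.map_zpow, _root_.map_zpow, Θ_none, Θ_some,
        ← _root_.map_zpow (inr : Multiplicative ℤ →* PP G 1),
        ← _root_.map_zpow (inr : Multiplicative ℤ →* PP G 1),
        zpow_neg, ← inl_aut, φS_of]
    norm_num
  · apply MonoidHom.ext_mint
    show Θ G (EE G (inr (ofAdd 1))) = inr (ofAdd 1)
    simp


/-- embedding PP G n → PP G 1 -/
def Jh (G : Type) (n : ℕ) : PP G n →* PP G 1 :=
  SemidirectProduct.lift inl (inr.comp (powMonoidHom n)) (by
    intro z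
    apply FreeGroup.ext_hom
    rintro ⟨i, g⟩
    show inl (φS G n z (FreeGroup.of (i,g))) = _ * inl (FreeGroup.of (i,g)) * _
    simp only [MulAut.conj_apply, MonoidHom.comp_apply, powMonoidHom_apply]
    rw [φS_of, ← _root_.map_inv, ← inl_aut, φS_of]
    norm_num [mul_comm])

@[simp] lemma Jh_inl (n : ℕ) (m : FreeGroup (ℤ × G)) : Jh G n (inl m) = inl m := lift_inl _ _ _ _
@[simp] lemma Jh_inr (n : ℕ) (z : Multiplicative ℤ) : Jh G n (inr z) = inr (z ^ n) :=
  lift_inr _ _ _ _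

lemma Jh_mk (n : ℕ) (q : PP G n) : Jh G n q = ⟨q.left, q.right ^ n⟩ := by
  conv_lhs => rw [← inl_left_mul_inr_right q]
  rw [_root_.map_mul, Jh_inl, Jh_inr, ← mk_eq_inl_mul_inr]


section DSide
variable (n : ℕ) (hn : n ≠ 0) (e : Fin n × G ≃ S)

/-- i mod n as an element of Fin n -/
def modFin (i : ℤ) : Fin n :=
  ⟨(i % (n : ℤ)).toNat, by
    have h1 : 0 ≤ i % (n : ℤ) := Int.emod_nonneg i (by exact_mod_cast hn)
    have h2 : i % (n : ℤ) < n := Int.emod_lt_of_pos i (by exact_mod_cast Nat.pos_of_ne_zero hn)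
    omega⟩

lemma modFin_coe (i : ℤ) : ((modFin n hn i : Fin n) : ℤ) = i % (n : ℤ) := by
  have h1 : 0 ≤ i % (n : ℤ) := Int.emod_nonneg i (by exact_mod_cast hn)
  simp [modFin]
  omega

lemma modFin_add_mul (i k : ℤ) : modFin n hn (i + (n : ℤ) * k) = modFin n hn i := by
  apply Fin.ext
  simp only [modFin]
  rw [mul_comm ((n:ℤ)) k, Int.add_mul_emod_self_right]

lemma modFin_coe_fin (j : Fin n) : modFin n hn ((j : ℤ)) = j := by
  apply Fin.ext
  simp only [modFin]
  rw [Int.emod_eq_of_lt (by positivity) (by exact_mod_cast j.2)]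
  simp

/-- The basic homomorphism on the free part -/
def DM : FreeGroup (ℤ × G) →* FreeGroup (Option S) :=
  FreeGroup.lift fun p =>
    (FreeGroup.of (none : Option S)) ^ (p.1 / (n : ℤ)) *
      FreeGroup.of (some (e (modFin n hn p.1, p.2))) *
      (FreeGroup.of (none : Option S)) ^ (-(p.1 / (n : ℤ)))

@[simp] lemma DM_of (i : ℤ) (g : G) :
    DM n hn e (FreeGroup.of (i, g)) =
      (FreeGroup.of (none : Option S)) ^ (i / (n : ℤ)) *
        FreeGroup.of (some (e (modFin n hn i, g))) *
        (FreeGroup.of (none : Option S)) ^ (-(i / (n : ℤ))) := FreeGroup.lift_apply_of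

/-- the isomorphism PP G n ≃ FreeGroup (Option S), forward direction -/
def Dh : PP G n →* FreeGroup (Option S) :=
  SemidirectProduct.lift (DM n hn e) (zpowersHom _ (FreeGroup.of (none : Option S))) (by
    intro z
    apply FreeGroup.ext_hom
    rintro ⟨i, g⟩
    show DM n hn e (φS G n z (FreeGroup.of (i,g))) = _ * DM n hn e (FreeGroup.of (i,g)) * _
    simp only [MulAut.conj_apply, zpowersHom_apply]
    rw [φS_of, DM_of, DM_of, modFin_add_mul,
      show (i + (n:ℤ) * toAdd z) / (n:ℤ) = i / (n:ℤ) + toAdd z by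
        rw [mul_comm, Int.add_mul_ediv_right _ _ (by exact_mod_cast hn)]]
    group)

@[simp] lemma Dh_inl (m : FreeGroup (ℤ × G)) : Dh n hn e (inl m) = DM n hn e m :=
  lift_inl _ _ _ _
@[simp] lemma Dh_inr (z : Multiplicative ℤ) :
    Dh n hn e (inr z) = (FreeGroup.of (none : Option S)) ^ z.toAdd := lift_inr _ _ _ _

lemma Dh_mk (q : PP G n) :
    Dh n hn e q = DM n hn e q.left * (FreeGroup.of (none : Option S)) ^ q.right.toAdd := by
  conv_lhs => rw [← inl_left_mul_inr_right q]
  rw [_root_.map_mul, Dh_inl, Dh_inr]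

/-- inverse direction -/
def Ch : FreeGroup (Option S) →* PP G n :=
  FreeGroup.lift fun o => o.elim (inr (ofAdd 1))
    (fun s => inl (FreeGroup.of (((((e.symm s).1 : Fin n) : ℤ)), (e.symm s).2)))

@[simp] lemma Ch_none : Ch n e (FreeGroup.of (none : Option S)) = inr (ofAdd 1) :=
  FreeGroup.lift_apply_of
@[simp] lemma Ch_some (s : S) :
    Ch n e (FreeGroup.of (some s)) =
      inl (FreeGroup.of ((((e.symm s).1 : Fin n) : ℤ), (e.symm s).2)) := FreeGroup.lift_apply_of

lemma Dh_Ch : (Dh n hn e).comp (Ch n e) = MonoidHom.id _ := by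
  apply FreeGroup.ext_hom
  rintro (_ | s)
  · show Dh n hn e (Ch n e (FreeGroup.of none)) = FreeGroup.of none
    rw [Ch_none, Dh_inr]
    simp
  · show Dh n hn e (Ch n e (FreeGroup.of (some s))) = FreeGroup.of (some s)
    rw [Ch_some, Dh_inl, DM_of, modFin_coe_fin,
      Int.ediv_eq_zero_of_lt (by positivity) (by exact_mod_cast (e.symm s).1.2)]
    simp

lemma Ch_Dh : (Ch n e).comp (Dh n hn e) = MonoidHom.id _ := by
  apply SemidirectProduct.hom_ext
  · apply FreeGroup.ext_hom
    rintro ⟨i, g⟩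
    simp only [MonoidHom.comp_apply, MonoidHom.id_comp, Dh_inl, DM_of]
    rw [_root_.map_mul, _root_.map_mul, _root_.map_zpow, _root_.map_zpow, Ch_none,
      Ch_some, Equiv.symm_apply_apply,
      ← _root_.map_zpow (inr : Multiplicative ℤ →* PP G n),
      ← _root_.map_zpow (inr : Multiplicative ℤ →* PP G n),
      zpow_neg, ← inl_aut, φS_of]
    show inl _ = inl (FreeGroup.of (i, g))
    congr 2
    rw [modFin_coe]
    simp only [toAdd_zpow, toAdd_ofAdd, smul_eq_mul, mul_one]
    rw [Int.emod_add_mul_ediv i (n:ℤ)]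
  · apply MonoidHom.ext_mint
    show Ch n e (Dh n hn e (inr (ofAdd 1))) = inr (ofAdd 1)
    rw [Dh_inr]
    simp

end DSide

/-- automorphism of FreeGroup (ℤ × G) induced by a permutation of G -/
def μA (w : G ≃ G) : MulAut (FreeGroup (ℤ × G)) :=
  FreeGroup.freeGroupCongr ((Equiv.refl ℤ).prodCongr w)

@[simp] lemma μA_of (w : G ≃ G) (i : ℤ) (g : G) :
    μA w (FreeGroup.of (i, g)) = FreeGroup.of (i, w g) := by
  simp [μA, FreeGroup.freeGroupCongr_apply]

/-- induced endomorphism of PP G d -/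
def Phat (w : G ≃ G) (d : ℕ) : PP G d →* PP G d :=
  SemidirectProduct.map (μA w).toMonoidHom (MonoidHom.id _) (by
    intro z
    apply FreeGroup.ext_hom
    rintro ⟨i, g⟩
    show μA w (φS G d z (FreeGroup.of (i,g))) = φS G d z (μA w (FreeGroup.of (i,g)))
    rw [φS_of, μA_of, μA_of, φS_of])

@[simp] lemma Phat_left (w : G ≃ G) (d : ℕ) (q : PP G d) :
    (Phat w d q).left = μA w q.left := rfl
@[simp] lemma Phat_right (w : G ≃ G) (d : ℕ) (q : PP G d) :
    (Phat w d q).right = q.right := rfl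
@[simp] lemma Phat_inl (w : G ≃ G) (d : ℕ) (m : FreeGroup (ℤ × G)) :
    Phat w d (inl m) = inl (μA w m) := by simp [Phat]
@[simp] lemma Phat_inr (w : G ≃ G) (d : ℕ) (z : Multiplicative ℤ) :
    Phat w d (inr z) = inr z := by simp [Phat]

end CLCore


lemma exists_equivariant_equiv (G W : Type) [Group G] [Group W] [Finite W]
    (ℓ : G →* W) (hinj : Function.Injective ℓ) (n : ℕ) (hn : n = ℓ.range.index) :
    ∃ e : Fin n × G ≃ W, ∀ (j : Fin n) (g h : G), e (j, g * h) = ℓ g * e (j, h) := by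
  have hcard : Nat.card (W ⧸ ℓ.range) = n := by rw [hn]; rfl
  let finEq : Fin n ≃ (W ⧸ ℓ.range) := (Finite.equivFinOfCardEq hcard).symm
  let eFun : Fin n × G → W := fun p => ℓ p.2 * (Quotient.out (finEq p.1))⁻¹
  have hbij : Function.Bijective eFun := by
    constructor
    · rintro ⟨j, a⟩ ⟨k, b⟩ hab
      simp only [eFun] at hab
      have h1 : (ℓ b)⁻¹ * ℓ a = (Quotient.out (finEq k))⁻¹ * Quotient.out (finEq j) := by
        have h0 : ℓ a = ℓ b * (Quotient.out (finEq k))⁻¹ * Quotient.out (finEq j) := by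
          rw [← mul_inv_eq_iff_eq_mul.mpr hab.symm]; group
        rw [h0]; group
      have h2 : (QuotientGroup.mk (Quotient.out (finEq k)) : W ⧸ ℓ.range) =
          QuotientGroup.mk (Quotient.out (finEq j)) :=
        QuotientGroup.eq.mpr ⟨b⁻¹ * a, by rw [_root_.map_mul, _root_.map_inv]; exact h1⟩
      have h4 : finEq k = finEq j := by
        rw [← Quotient.out_eq (finEq k), ← Quotient.out_eq (finEq j)]; exact h2
      have hjk : j = k := (finEq.injective h4).symm
      subst hjk
      have hab2 : ℓ a = ℓ b := mul_right_cancel hab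
      exact Prod.ext rfl (hinj hab2)
    · intro σ
      obtain ⟨g, hg⟩ : σ * Quotient.out (QuotientGroup.mk σ⁻¹ : W ⧸ ℓ.range) ∈ ℓ.range := by
        have h3 : (QuotientGroup.mk σ⁻¹ : W ⧸ ℓ.range) =
            QuotientGroup.mk (Quotient.out (QuotientGroup.mk σ⁻¹ : W ⧸ ℓ.range)) :=
          (Quotient.out_eq _).symm
        rw [QuotientGroup.eq] at h3
        simpa using h3
      refine ⟨(finEq.symm (QuotientGroup.mk σ⁻¹), g), ?_⟩
      simp only [eFun, Equiv.apply_symm_apply]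
      rw [hg]
      group
  exact ⟨Equiv.ofBijective eFun hbij, fun j g h => by
    simp only [Equiv.ofBijective_apply, eFun, _root_.map_mul, mul_assoc]⟩


open FreeGroup SemidirectProduct Multiplicative CLCore in
/-- Algebraic core of the construction lemma. Let `G` be a finite group,
`ℓ : G →* Equiv.Perm G` the left regular representation, and `n` the index of the image
of `ℓ`. Let `f : FreeGroup (Option G) →* Multiplicative (ZMod n)` send each generator
`a_g` to `1` and `a_*` to `Multiplicative.ofAdd 1`, and `K = ker f`. Let
`Φ : G →* MulAut (FreeGroup (Option G))` and
`Ψ : Equiv.Perm G →* MulAut (FreeGroup (Option (Equiv.Perm G)))` be the actions induced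
on generators by left multiplication on the indices (fixing `none`), where each `Φ g`
preserves `K`. Then there is an isomorphism `ψ : K ≃* FreeGroup (Option (Equiv.Perm G))`
intertwining the `G`-actions: `ψ (Φ g x) = Ψ (ℓ g) (ψ x)` for `g ∈ G`, `x ∈ K`. -/
theorem construction_lemma_algebraic_core (G : Type) [Group G] [Finite G]
    (ℓ : G →* Equiv.Perm G) (hℓ : ∀ g x : G, ℓ g x = g * x)
    (n : ℕ) (hn : n = ℓ.range.index)
    (f : FreeGroup (Option G) →* Multiplicative (ZMod n))
    (hf₁ : ∀ g : G, f (FreeGroup.of (some g)) = 1)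
    (hf₂ : f (FreeGroup.of none) = Multiplicative.ofAdd 1)
    (Φ : G →* MulAut (FreeGroup (Option G)))
    (hΦ : ∀ (g : G) (o : Option G),
      Φ g (FreeGroup.of o) = FreeGroup.of (o.map (fun h => g * h)))
    (hΦK : ∀ (g : G) (x : FreeGroup (Option G)), x ∈ f.ker → Φ g x ∈ f.ker)
    (Ψ : Equiv.Perm G →* MulAut (FreeGroup (Option (Equiv.Perm G))))
    (hΨ : ∀ (σ : Equiv.Perm G) (o : Option (Equiv.Perm G)),
      Ψ σ (FreeGroup.of o) = FreeGroup.of (o.map (fun τ => σ * τ))) :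
    ∃ ψ : f.ker ≃* FreeGroup (Option (Equiv.Perm G)),
      ∀ (g : G) (x : f.ker),
        ψ ⟨Φ g ↑x, hΦK g ↑x x.2⟩ = Ψ (ℓ g) (ψ x) := by
  classical
  have hn0 : n ≠ 0 := by rw [hn]; exact Subgroup.index_ne_zero_of_finite
  have hinj : Function.Injective ℓ := by
    intro a b hab
    have h := congrArg (fun σ : Equiv.Perm G => σ 1) hab
    simp only [hℓ, mul_one] at h
    exact h
  obtain ⟨e, he⟩ := exists_equivariant_equiv G (Equiv.Perm G) ℓ hinj n hn
  -- factorization of f through the ℤ-exponent of the star generator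
  have hfeq : f = (AddMonoidHom.toMultiplicative (Int.castAddHom (ZMod n))).comp
      (SemidirectProduct.rightHom.comp (CLCore.Θ G)) := by
    apply FreeGroup.ext_hom
    rintro (_ | g)
    · rw [hf₂]; simp
    · rw [hf₁]; simp
  have hker : ∀ x : FreeGroup (Option G),
      x ∈ f.ker ↔ (n : ℤ) ∣ toAdd (CLCore.Θ G x).right := by
    intro x
    rw [MonoidHom.mem_ker, hfeq]
    simp only [MonoidHom.comp_apply, AddMonoidHom.toMultiplicative_apply_apply,
      Int.coe_castAddHom, rightHom_eq_right]
    rw [← ofAdd_zero]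
    rw [show ∀ a b : ZMod n, ofAdd a = ofAdd b ↔ a = b from fun a b => Iff.rfl]
    exact ZMod.intCast_zmod_eq_zero_iff_dvd _ n
  -- the raw map K → PP G n
  let mkq : f.ker → CLCore.PP G n := fun x =>
    ⟨(CLCore.Θ G x.1).left, ofAdd (toAdd (CLCore.Θ G x.1).right / (n : ℤ))⟩
  -- the homomorphism PP G n → K
  let q2k : CLCore.PP G n →* f.ker :=
    ((CLCore.EE G).comp (CLCore.Jh G n)).codRestrict f.ker (by
      intro q
      have hE : CLCore.Θ G (CLCore.EE G (CLCore.Jh G n q)) = CLCore.Jh G n q := by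
        have h := DFunLike.congr_fun (CLCore.Θ_EE (G := G)) (CLCore.Jh G n q)
        simpa using h
      rw [show ((CLCore.EE G).comp (CLCore.Jh G n)) q
          = CLCore.EE G (CLCore.Jh G n q) from rfl, hker, hE, CLCore.Jh_mk]
      show (n : ℤ) ∣ toAdd (q.right ^ n)
      rw [toAdd_pow, nsmul_eq_mul]
      exact dvd_mul_right _ _)
  have hq2k_coe : ∀ q : CLCore.PP G n,
      (q2k q : FreeGroup (Option G)) = CLCore.EE G (CLCore.Jh G n q) := fun _ => rfl
  have hΘq2k : ∀ q : CLCore.PP G n,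
      CLCore.Θ G (q2k q : FreeGroup (Option G)) = CLCore.Jh G n q := by
    intro q
    rw [hq2k_coe]
    have h := DFunLike.congr_fun (CLCore.Θ_EE (G := G)) (CLCore.Jh G n q)
    simpa using h
  -- mkq ∘ q2k = id
  have hmkq_q2k : ∀ q : CLCore.PP G n, mkq (q2k q) = q := by
    intro q
    show (⟨(CLCore.Θ G (q2k q : FreeGroup (Option G))).left,
      ofAdd (toAdd (CLCore.Θ G (q2k q : FreeGroup (Option G))).right / (n : ℤ))⟩
        : CLCore.PP G n) = q
    rw [hΘq2k, CLCore.Jh_mk]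
    show (⟨q.left, ofAdd (toAdd (q.right ^ n) / (n : ℤ))⟩ : CLCore.PP G n)
      = ⟨q.left, q.right⟩
    congr 1
    rw [toAdd_pow, nsmul_eq_mul,
      Int.mul_ediv_cancel_left _ (by exact_mod_cast hn0), ofAdd_toAdd]
  -- q2k ∘ mkq = id
  have hq2k_mkq : ∀ x : f.ker, q2k (mkq x) = x := by
    intro x
    apply Subtype.ext
    rw [hq2k_coe]
    have hJ : CLCore.Jh G n (mkq x) = CLCore.Θ G x.1 := by
      rw [CLCore.Jh_mk]
      show (⟨(CLCore.Θ G x.1).left,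
        (ofAdd (toAdd (CLCore.Θ G x.1).right / (n : ℤ))) ^ n⟩ : CLCore.PP G 1)
        = ⟨(CLCore.Θ G x.1).left, (CLCore.Θ G x.1).right⟩
      congr 1
      rw [← ofAdd_nsmul, nsmul_eq_mul,
        Int.mul_ediv_cancel' ((hker x.1).mp x.2), ofAdd_toAdd]
    rw [hJ]
    have h := DFunLike.congr_fun (CLCore.EE_Θ (G := G)) x.1
    simpa using h
  -- the inverse isomorphism
  let ψ' : FreeGroup (Option (Equiv.Perm G)) ≃* f.ker :=
    { toFun := fun h => q2k (CLCore.Ch n e h)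
      invFun := fun x => CLCore.Dh n hn0 e (mkq x)
      left_inv := fun h => by
        show CLCore.Dh n hn0 e (mkq (q2k (CLCore.Ch n e h))) = h
        rw [hmkq_q2k]
        have h5 := DFunLike.congr_fun (CLCore.Dh_Ch n hn0 e) h
        simpa using h5
      right_inv := fun x => by
        have h5 := DFunLike.congr_fun (CLCore.Ch_Dh n hn0 e) (mkq x)
        simp only [MonoidHom.comp_apply, MonoidHom.id_apply] at h5
        show q2k (CLCore.Ch n e (CLCore.Dh n hn0 e (mkq x))) = x
        rw [h5]
        exact hq2k_mkq x
      map_mul' := fun a b => by simp [_root_.map_mul] }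
  refine ⟨ψ'.symm, ?_⟩
  have hψ : ∀ y : f.ker, ψ'.symm y = CLCore.Dh n hn0 e (mkq y) := fun y => rfl
  -- equivariance
  have hΘΦ : ∀ g : G, (CLCore.Θ G).comp (Φ g).toMonoidHom
      = (CLCore.Phat (Equiv.mulLeft g) 1).comp (CLCore.Θ G) := by
    intro g
    apply FreeGroup.ext_hom
    rintro (_ | h) <;>
      simp [hΦ, CLCore.Θ_none, CLCore.Θ_some, Option.map_none, Option.map_some]
  have hDM : ∀ g : G, (CLCore.DM n hn0 e).comp (CLCore.μA (Equiv.mulLeft g)).toMonoidHom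
      = (Ψ (ℓ g)).toMonoidHom.comp (CLCore.DM n hn0 e) := by
    intro g
    apply FreeGroup.ext_hom
    rintro ⟨i, h⟩
    show CLCore.DM n hn0 e (CLCore.μA (Equiv.mulLeft g) (FreeGroup.of (i, h)))
      = Ψ (ℓ g) (CLCore.DM n hn0 e (FreeGroup.of (i, h)))
    rw [CLCore.μA_of, CLCore.DM_of, CLCore.DM_of]
    rw [_root_.map_mul, _root_.map_mul, _root_.map_zpow, _root_.map_zpow, hΨ, hΨ]
    simp only [Option.map_some, Option.map_none, Equiv.coe_mulLeft]
    rw [he]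
  intro g x
  have h1 : CLCore.Θ G (Φ g x.1)
      = CLCore.Phat (Equiv.mulLeft g) 1 (CLCore.Θ G x.1) := by
    have h := DFunLike.congr_fun (hΘΦ g) x.1
    simpa using h
  have h2 : mkq ⟨Φ g ↑x, hΦK g ↑x x.2⟩
      = ⟨CLCore.μA (Equiv.mulLeft g) (CLCore.Θ G x.1).left,
          ofAdd (toAdd (CLCore.Θ G x.1).right / (n : ℤ))⟩ := by
    show (⟨(CLCore.Θ G (Φ g x.1)).left,
      ofAdd (toAdd (CLCore.Θ G (Φ g x.1)).right / (n : ℤ))⟩ : CLCore.PP G n) = _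
    rw [h1, CLCore.Phat_left, CLCore.Phat_right]
  have hDMx := DFunLike.congr_fun (hDM g) (CLCore.Θ G x.1).left
  simp only [MonoidHom.comp_apply, MulEquiv.coe_toMonoidHom] at hDMx
  have hb : Ψ (ℓ g) ((FreeGroup.of (none : Option (Equiv.Perm G)))
      ^ (toAdd (CLCore.Θ G x.1).right / (n : ℤ)))
      = (FreeGroup.of (none : Option (Equiv.Perm G)))
        ^ (toAdd (CLCore.Θ G x.1).right / (n : ℤ)) := by
    rw [_root_.map_zpow, hΨ]
    simp
  calc ψ'.symm ⟨Φ g ↑x, hΦK g ↑x x.2⟩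
      = CLCore.Dh n hn0 e (mkq ⟨Φ g ↑x, hΦK g ↑x x.2⟩) := hψ _
    _ = CLCore.Dh n hn0 e ⟨CLCore.μA (Equiv.mulLeft g) (CLCore.Θ G x.1).left,
          ofAdd (toAdd (CLCore.Θ G x.1).right / (n : ℤ))⟩ := by rw [h2]
    _ = CLCore.DM n hn0 e (CLCore.μA (Equiv.mulLeft g) (CLCore.Θ G x.1).left)
          * (FreeGroup.of (none : Option (Equiv.Perm G)))
            ^ (toAdd (CLCore.Θ G x.1).right / (n : ℤ)) := by
        rw [CLCore.Dh_mk]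
        rfl
    _ = Ψ (ℓ g) (CLCore.DM n hn0 e (CLCore.Θ G x.1).left)
          * Ψ (ℓ g) ((FreeGroup.of (none : Option (Equiv.Perm G)))
            ^ (toAdd (CLCore.Θ G x.1).right / (n : ℤ))) := by
        rw [hDMx, hb]
    _ = Ψ (ℓ g) (CLCore.DM n hn0 e (CLCore.Θ G x.1).left
          * (FreeGroup.of (none : Option (Equiv.Perm G)))
            ^ (toAdd (CLCore.Θ G x.1).right / (n : ℤ))) := by
        rw [_root_.map_mul]
    _ = Ψ (ℓ g) (CLCore.Dh n hn0 e (mkq x)) := by rw [CLCore.Dh_mk]; rfl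
    _ = Ψ (ℓ g) (ψ'.symm x) := by rw [hψ]
end

section
/- (Existence of Hall's universal group) There exists a group U such that: U is countable; U is locally finite (every finitely generated subgroup of U is finite); every finite group admits an injective group homomorphism into U; and for every finite group C and any two injective group homomorphisms φ, ψ : C → U, there exists u ∈ U with ψ(c) = u · φ(c) · u⁻¹ for all c ∈ C. -/
namespace HallU
def G : ℕ → Type
  | 0 => Multiplicative (ZMod 3)
  | n+1 => Equiv.Perm (G n)

instance instGroupG : ∀ n, Group (G n)
  | 0 => inferInstanceAs (Group (Multiplicative (ZMod 3)))
  | _+1 => inferInstanceAs (Group (Equiv.Perm (G _)))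

instance instFiniteG : ∀ n, Finite (G n)
  | 0 => inferInstanceAs (Finite (Multiplicative (ZMod 3)))
  | n+1 => letI := instFiniteG n; inferInstanceAs (Finite (Equiv.Perm (G n)))

def tr (n : ℕ) : G n →* G (n+1) := MulAction.toPermHom (G n) (G n)

lemma tr_apply (n : ℕ) (g x : G n) : (show Equiv.Perm (G n) from tr n g) x = g * x := rfl

lemma tr_injective (n : ℕ) : Function.Injective (tr n) := by
  intro a b h
  have := congrArg (fun p : Equiv.Perm (G n) => p 1) h
  simpa [tr_apply] using this

def trLE : ∀ {n m : ℕ}, n ≤ m → (G n →* G m) :=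
  fun {n m} h => Nat.leRecOn h (fun {k} f => (tr k).comp f) (MonoidHom.id (G n))

lemma trLE_refl (n : ℕ) (x : G n) : trLE (le_refl n) x = x := by
  rw [trLE, Nat.leRecOn_self]; rfl

lemma trLE_succ {n m : ℕ} (h : n ≤ m) (h' : n ≤ m + 1) (x : G n) :
    trLE h' x = tr m (trLE h x) := by
  rw [trLE, trLE, Nat.leRecOn_succ h]; rfl

lemma trLE_trans {n m k : ℕ} (h1 : n ≤ m) (h2 : m ≤ k) (x : G n) :
    trLE h2 (trLE h1 x) = trLE (h1.trans h2) x := by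
  induction k, h2 using Nat.le_induction with
  | base => rw [trLE_refl]
  | succ k hk ih =>
      rw [trLE_succ hk (Nat.le_succ_of_le hk), ih,
        trLE_succ (h1.trans hk) (h1.trans (Nat.le_succ_of_le hk))]

lemma trLE_injective {n m : ℕ} (h : n ≤ m) : Function.Injective (trLE h) := by
  induction m, h using Nat.le_induction with
  | base => intro a b hab; rwa [trLE_refl, trLE_refl] at hab
  | succ k hk ih =>
      intro a b hab
      rw [trLE_succ hk (Nat.le_succ_of_le hk), trLE_succ hk (Nat.le_succ_of_le hk)] at hab
      exact ih (tr_injective k hab)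

/-- the equivalence relation on the sigma type -/
def r (p q : Σ n, G n) : Prop :=
  ∃ (k : ℕ) (h1 : p.1 ≤ k) (h2 : q.1 ≤ k), trLE h1 p.2 = trLE h2 q.2

lemma r_all {p q : Σ n, G n} (h : r p q) :
    ∀ (k : ℕ) (h1 : p.1 ≤ k) (h2 : q.1 ≤ k), trLE h1 p.2 = trLE h2 q.2 := by
  obtain ⟨k0, a1, a2, he⟩ := h
  intro k h1 h2
  apply trLE_injective (le_max_right k0 k)
  rw [trLE_trans h1 (le_max_right k0 k), trLE_trans h2 (le_max_right k0 k),
    ← trLE_trans a1 (le_max_left k0 k), ← trLE_trans a2 (le_max_left k0 k), he]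

lemma r_refl (p : Σ n, G n) : r p p := ⟨p.1, le_refl _, le_refl _, rfl⟩

lemma r_symm {p q : Σ n, G n} (h : r p q) : r q p := by
  obtain ⟨k, h1, h2, he⟩ := h; exact ⟨k, h2, h1, he.symm⟩

lemma r_trans {p q s : Σ n, G n} (h : r p q) (h' : r q s) : r p s := by
  refine ⟨max p.1 (max q.1 s.1), le_max_left _ _, le_trans (le_max_right _ _) (le_max_right _ _), ?_⟩
  rw [r_all h _ (le_max_left _ _) (le_trans (le_max_left _ _) (le_max_right _ _)),
    r_all h' _ (le_trans (le_max_left _ _) (le_max_right _ _))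
      (le_trans (le_max_right _ _) (le_max_right _ _))]

instance setoidU : Setoid (Σ n, G n) := ⟨r, r_refl, r_symm, r_trans⟩

def U : Type := Quotient setoidU

instance : Countable U := Quotient.mk_surjective.countable

def ι (n : ℕ) (x : G n) : U := ⟦⟨n, x⟩⟧

lemma ι_trLE {n m : ℕ} (h : n ≤ m) (x : G n) : ι m (trLE h x) = ι n x :=
  Quotient.sound ⟨m, le_refl m, h, by rw [trLE_refl]⟩

lemma ι_injective (n : ℕ) : Function.Injective (ι n) := by
  intro a b h
  have := r_all (Quotient.exact h) n (le_refl n) (le_refl n)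
  rwa [trLE_refl, trLE_refl] at this

instance : Mul U :=
  ⟨Quotient.map₂
    (fun p q => ⟨max p.1 q.1, trLE (le_max_left _ _) p.2 * trLE (le_max_right _ _) q.2⟩)
    (by
      intro p p' hp q q' hq
      refine ⟨max (max p.1 q.1) (max p'.1 q'.1), le_max_left _ _, le_max_right _ _, ?_⟩
      rw [map_mul, map_mul, trLE_trans, trLE_trans, trLE_trans, trLE_trans,
        r_all hp _ (le_trans (le_max_left _ _) (le_max_left _ _))
          (le_trans (le_max_left _ _) (le_max_right _ _)),
        r_all hq _ (le_trans (le_max_right _ _) (le_max_left _ _))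
          (le_trans (le_max_right _ _) (le_max_right _ _))])⟩

instance : One U := ⟨ι 0 1⟩

instance : Inv U :=
  ⟨Quotient.map (fun p => ⟨p.1, p.2⁻¹⟩)
    (by
      intro p q h
      refine ⟨max p.1 q.1, le_max_left _ _, le_max_right _ _, ?_⟩
      rw [map_inv, map_inv, r_all h _ (le_max_left _ _) (le_max_right _ _)])⟩

lemma ι_mul (n : ℕ) (x y : G n) : ι n x * ι n y = ι n (x * y) := by
  refine Quotient.sound ⟨max n n, le_refl _, le_max_left n n, ?_⟩
  rw [trLE_refl, map_mul]

lemma ι_one (n : ℕ) : ι n 1 = 1 := by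
  show ι n 1 = ι 0 1
  rw [← ι_trLE (Nat.zero_le n) 1, map_one (trLE (Nat.zero_le n))]

lemma ι_inv (n : ℕ) (x : G n) : (ι n x)⁻¹ = ι n x⁻¹ := rfl

lemma exists_rep (u : U) : ∃ n x, u = ι n x := by
  obtain ⟨⟨n, x⟩, rfl⟩ := Quotient.mk_surjective u
  exact ⟨n, x, rfl⟩

lemma exists_rep₂ (u v : U) : ∃ n x y, u = ι n x ∧ v = ι n y := by
  obtain ⟨n, x, rfl⟩ := exists_rep u
  obtain ⟨m, y, rfl⟩ := exists_rep v
  exact ⟨max n m, trLE (le_max_left n m) x, trLE (le_max_right n m) y,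
    (ι_trLE _ _).symm, (ι_trLE _ _).symm⟩

lemma exists_rep₃ (u v w : U) : ∃ n x y z, u = ι n x ∧ v = ι n y ∧ w = ι n z := by
  obtain ⟨n, x, y, rfl, rfl⟩ := exists_rep₂ u v
  obtain ⟨m, z, rfl⟩ := exists_rep w
  exact ⟨max n m, trLE (le_max_left n m) x, trLE (le_max_left n m) y, trLE (le_max_right n m) z,
    (ι_trLE _ _).symm, (ι_trLE _ _).symm, (ι_trLE _ _).symm⟩

instance : Group U where
  mul_assoc a b c := by
    obtain ⟨n, x, y, z, rfl, rfl, rfl⟩ := exists_rep₃ a b c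
    rw [ι_mul, ι_mul, ι_mul, ι_mul, mul_assoc]
  one_mul a := by
    obtain ⟨n, x, rfl⟩ := exists_rep a
    rw [← ι_one n, ι_mul, one_mul]
  mul_one a := by
    obtain ⟨n, x, rfl⟩ := exists_rep a
    rw [← ι_one n, ι_mul, mul_one]
  inv_mul_cancel a := by
    obtain ⟨n, x, rfl⟩ := exists_rep a
    rw [ι_inv, ι_mul, inv_mul_cancel, ι_one]

def ιHom (n : ℕ) : G n →* U where
  toFun := ι n
  map_one' := ι_one n
  map_mul' x y := (ι_mul n x y).symm


def actSetoid {C X : Type} [Group C] (a : C →* Equiv.Perm X) : Setoid X :=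
  ⟨fun x y => ∃ c : C, a c x = y,
   ⟨fun x => ⟨1, by simp⟩,
    fun {x y} h => by
      obtain ⟨c, hc⟩ := h
      exact ⟨c⁻¹, by rw [← hc, ← Equiv.Perm.mul_apply, ← map_mul, inv_mul_cancel, map_one,
        Equiv.Perm.coe_one, id_eq]⟩,
    fun {x y z} h h' => by
      obtain ⟨c, hc⟩ := h; obtain ⟨d, hd⟩ := h'
      exact ⟨d * c, by rw [map_mul, Equiv.Perm.mul_apply, hc, hd]⟩⟩⟩

noncomputable def actEquiv {C X : Type} [Group C] (a : C →* Equiv.Perm X)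
    (ha : ∀ c x, a c x = x → c = 1) : C × Quotient (actSetoid a) ≃ X :=
  Equiv.ofBijective (fun p => a p.1 p.2.out)
    (by
      constructor
      · rintro ⟨c, q⟩ ⟨c', q'⟩ h
        simp only at h
        have hq : q = q' := by
          rw [← Quotient.out_eq q, ← Quotient.out_eq q']
          refine Quotient.sound ⟨c'⁻¹ * c, ?_⟩
          rw [map_mul, Equiv.Perm.mul_apply, h, ← Equiv.Perm.mul_apply, ← map_mul,
            inv_mul_cancel, map_one, Equiv.Perm.coe_one, id_eq]
        subst hq
        have hc : c'⁻¹ * c = 1 := by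
          refine ha _ q.out ?_
          rw [map_mul, Equiv.Perm.mul_apply, h, ← Equiv.Perm.mul_apply, ← map_mul,
            inv_mul_cancel, map_one, Equiv.Perm.coe_one, id_eq]
        have : c = c' := by
          have := congrArg (c' * ·) hc
          simpa [mul_assoc] using this
        rw [this]
      · intro x
        obtain ⟨c, hc⟩ := Quotient.mk_out (s := actSetoid a) x
        exact ⟨⟨c, ⟦x⟧⟩, hc⟩)

lemma conj_free {C X : Type} [Group C] [Finite C] [Finite X]
    (a b : C →* Equiv.Perm X)
    (ha : ∀ c x, a c x = x → c = 1) (hb : ∀ c x, b c x = x → c = 1) :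
    ∃ π : Equiv.Perm X, ∀ c, b c = π * a c * π⁻¹ := by
  classical
  letI : Fintype X := Fintype.ofFinite X
  letI : Fintype C := Fintype.ofFinite C
  letI : Fintype (Quotient (actSetoid a)) := Fintype.ofFinite _
  letI : Fintype (Quotient (actSetoid b)) := Fintype.ofFinite _
  let ea := actEquiv a ha
  let eb := actEquiv b hb
  have hcard : Fintype.card (Quotient (actSetoid a)) = Fintype.card (Quotient (actSetoid b)) := by
    have h1 := Fintype.card_congr ea
    have h2 := Fintype.card_congr eb
    rw [Fintype.card_prod] at h1 h2
    exact Nat.eq_of_mul_eq_mul_left Fintype.card_pos (h1.trans h2.symm)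
  let ρ := Fintype.equivOfCardEq hcard
  let e : Equiv.Perm X := ea.symm.trans ((Equiv.prodCongr (Equiv.refl C) ρ).trans eb)
  have key : ∀ (c : C) (x : X), e (a c x) = b c (e x) := by
    intro c x
    obtain ⟨⟨d, q⟩, hx⟩ : ∃ p, ea p = x := ⟨ea.symm x, ea.apply_symm_apply x⟩
    have h1 : a c x = ea (c * d, q) := by
      rw [← hx]
      show a c (a d q.out) = a (c * d) q.out
      rw [map_mul, Equiv.Perm.mul_apply]
    have h2 : e x = eb (d, ρ q) := by
      rw [← hx]
      show eb ((Equiv.prodCongr (Equiv.refl C) ρ) (ea.symm (ea (d, q)))) = _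
      rw [ea.symm_apply_apply]
      rfl
    rw [h1, h2]
    show eb ((Equiv.prodCongr (Equiv.refl C) ρ) (ea.symm (ea (c * d, q)))) = _
    rw [ea.symm_apply_apply]
    show b (c * d) (ρ q).out = b c (b d (ρ q).out)
    rw [map_mul, Equiv.Perm.mul_apply]
  refine ⟨e, fun c => Equiv.ext fun y => ?_⟩
  have := key c (e.symm y)
  rw [e.apply_symm_apply] at this
  simp only [Equiv.Perm.mul_apply]
  rw [← this]
  rfl

lemma ι_succ (n : ℕ) (x : G n) : ι (n+1) (tr n x) = ι n x := by
  rw [← ι_trLE (Nat.le_succ n) x, trLE_succ (le_refl n) (Nat.le_succ n), trLE_refl]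

lemma card_G_ge (n : ℕ) : n + 3 ≤ Nat.card (G n) := by
  classical
  induction n with
  | zero =>
      have : Nat.card (G 0) = 3 := by
        rw [show Nat.card (G 0) = Nat.card (ZMod 3) from
          Nat.card_congr Multiplicative.ofAdd.symm, Nat.card_zmod]
      omega
  | succ n ih =>
      have hcard : Nat.card (G (n+1)) = (Nat.card (G n)).factorial := by
        letI : Fintype (G n) := Fintype.ofFinite _
        letI : DecidableEq (G n) := Classical.decEq _
        rw [show Nat.card (G (n+1)) = Nat.card (Equiv.Perm (G n)) from rfl,
          Nat.card_eq_fintype_card, Nat.card_eq_fintype_card, Fintype.card_perm]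
      rw [hcard]
      set m := Nat.card (G n) with hm
      have h3 : 3 ≤ m := le_trans (by omega) ih
      have h2 : 2 ≤ (m - 1).factorial := by
        calc 2 = (2 : ℕ).factorial := rfl
        _ ≤ (m - 1).factorial := Nat.factorial_le (by omega)
      have hfac : m.factorial = m * (m - 1).factorial := by
        conv_lhs => rw [show m = (m - 1) + 1 by omega]
        rw [Nat.factorial_succ]
        congr 1; omega
      have : m * 2 ≤ m * (m - 1).factorial := Nat.mul_le_mul_left m h2
      omega

/-- Every finite group embeds into some `G (n+1)` as a group of permutations of `G n`. -/
lemma exists_embedding (C : Type) [Group C] [Finite C] :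
    ∃ (n : ℕ) (f : C →* Equiv.Perm (G n)), Function.Injective f := by
  classical
  obtain ⟨n, hn⟩ : ∃ n, Nat.card C ≤ Nat.card (G n) :=
    ⟨Nat.card C, le_trans (by omega) (card_G_ge (Nat.card C))⟩
  letI : Fintype C := Fintype.ofFinite C
  letI : Fintype (G n) := Fintype.ofFinite _
  rw [Nat.card_eq_fintype_card, Nat.card_eq_fintype_card] at hn
  obtain ⟨f0⟩ : Nonempty (C ↪ G n) := Function.Embedding.nonempty_of_card_le hn
  have cayley_inj : Function.Injective (MulAction.toPermHom C C) := by
    intro a b h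
    have := congrArg (fun p : Equiv.Perm C => p 1) h
    simpa using this
  exact ⟨n, (Equiv.Perm.viaEmbeddingHom f0).comp (MulAction.toPermHom C C),
    (Equiv.Perm.viaEmbeddingHom_injective f0).comp cayley_inj⟩

/-- Any homomorphism from a finite group into `U` factors through some stage. -/
lemma exists_factor {C : Type} [Group C] [Finite C] (φ : C →* U) :
    ∃ (N : ℕ) (φ' : C →* G N), ∀ c, ι N (φ' c) = φ c := by
  classical
  letI : Fintype C := Fintype.ofFinite C
  have h : ∀ c : C, ∃ n x, φ c = ι n x := fun c => exists_rep (φ c)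
  choose f g hg using h
  set N := Finset.univ.sup f with hN
  have hNc : ∀ c, f c ≤ N := fun c => Finset.le_sup (Finset.mem_univ c)
  have hι : ∀ c, ι N (trLE (hNc c) (g c)) = φ c := fun c => by rw [ι_trLE, ← hg]
  refine ⟨N, { toFun := fun c => trLE (hNc c) (g c), map_one' := ?_, map_mul' := ?_ }, hι⟩
  · apply ι_injective N
    rw [hι, map_one φ, ι_one]
  · intro x y
    apply ι_injective N
    rw [← ι_mul, hι, hι, hι, map_mul]

end HallU

/-- Existence of Hall's universal group: there is a countable, locally finite group `U`
such that every finite group embeds into `U` and any two embeddings of a finite group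
into `U` are conjugate in `U`. -/
theorem exists_hall_universal_group :
    ∃ (U : Type) (_ : Group U),
      Countable U ∧
      (∀ S : Subgroup U, S.FG → Finite S) ∧
      (∀ (C : Type) [Group C] [Finite C], ∃ φ : C →* U, Function.Injective φ) ∧
      (∀ (C : Type) [Group C] [Finite C] (φ ψ : C →* U),
        Function.Injective φ → Function.Injective ψ →
          ∃ u : U, ∀ c : C, ψ c = u * φ c * u⁻¹) := by
  classical
  refine ⟨HallU.U, inferInstance, inferInstance, ?_, ?_, ?_⟩
  · -- locally finite
    rintro S ⟨T, hT⟩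
    have h : ∀ t : T, ∃ n x, (t : HallU.U) = HallU.ι n x := fun t => HallU.exists_rep t
    choose f g hg using h
    set N := Finset.univ.sup f with hNdef
    have hsub : (T : Set HallU.U) ⊆ (HallU.ιHom N).range := by
      intro t ht
      have h1 : (⟨t, ht⟩ : T).1 = HallU.ι (f ⟨t, ht⟩) (g ⟨t, ht⟩) := hg ⟨t, ht⟩
      have h2 : f ⟨t, ht⟩ ≤ N := Finset.le_sup (Finset.mem_univ _)
      refine ⟨HallU.trLE h2 (g ⟨t, ht⟩), ?_⟩
      show HallU.ι N (HallU.trLE h2 (g ⟨t, ht⟩)) = t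
      rw [HallU.ι_trLE]
      exact h1.symm
    have hle : S ≤ (HallU.ιHom N).range := hT ▸ (Subgroup.closure_le _).mpr hsub
    have hfin : Finite (HallU.ιHom N).range :=
      Finite.of_surjective _ (HallU.ιHom N).rangeRestrict_surjective
    exact Finite.of_injective (Subgroup.inclusion hle) (Subgroup.inclusion_injective hle)
  · -- every finite group embeds
    intro C _ _
    obtain ⟨n, f, hf⟩ := HallU.exists_embedding C
    let j : Equiv.Perm (HallU.G n) →* HallU.U :=
      show Equiv.Perm (HallU.G n) →* HallU.U from HallU.ιHom (n+1)
    have hj : Function.Injective j := fun a b h => HallU.ι_injective (n+1) h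
    exact ⟨j.comp f, hj.comp hf⟩
  · -- conjugacy of embeddings
    intro C _ _ φ ψ hφ hψ
    obtain ⟨N1, φ1, hφ1⟩ := HallU.exists_factor φ
    obtain ⟨N2, ψ1, hψ1⟩ := HallU.exists_factor ψ
    set N := max N1 N2 with hNdef
    set φ' := (HallU.trLE (le_max_left N1 N2)).comp φ1 with hφ'def
    set ψ' := (HallU.trLE (le_max_right N1 N2)).comp ψ1 with hψ'def
    have hφι : ∀ c, HallU.ι N (φ' c) = φ c := fun c => by
      rw [hφ'def]; show HallU.ι N (HallU.trLE _ (φ1 c)) = φ c; rw [HallU.ι_trLE, hφ1]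
    have hψι : ∀ c, HallU.ι N (ψ' c) = ψ c := fun c => by
      rw [hψ'def]; show HallU.ι N (HallU.trLE _ (ψ1 c)) = ψ c; rw [HallU.ι_trLE, hψ1]
    have hφ'inj : Function.Injective φ' := fun a b h => hφ (by rw [← hφι a, ← hφι b, h])
    have hψ'inj : Function.Injective ψ' := fun a b h => hψ (by rw [← hψι a, ← hψι b, h])
    let a : C →* Equiv.Perm (HallU.G N) := (MulAction.toPermHom (HallU.G N) (HallU.G N)).comp φ'
    let b : C →* Equiv.Perm (HallU.G N) := (MulAction.toPermHom (HallU.G N) (HallU.G N)).comp ψ'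
    have ha : ∀ c x, a c x = x → c = 1 := by
      intro c x h
      have h1 : φ' c * x = x := h
      have h2 : φ' c * x = 1 * x := by rw [h1, one_mul]
      exact hφ'inj (by rw [mul_right_cancel h2, map_one])
    have hb : ∀ c x, b c x = x → c = 1 := by
      intro c x h
      have h1 : ψ' c * x = x := h
      have h2 : ψ' c * x = 1 * x := by rw [h1, one_mul]
      exact hψ'inj (by rw [mul_right_cancel h2, map_one])
    obtain ⟨π, hπ⟩ := HallU.conj_free a b ha hb
    let j : Equiv.Perm (HallU.G N) →* HallU.U :=
      show Equiv.Perm (HallU.G N) →* HallU.U from HallU.ιHom (N+1)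
    have hj : ∀ x : HallU.G N, j (HallU.tr N x) = HallU.ι N x := fun x => HallU.ι_succ N x
    refine ⟨j π, fun c => ?_⟩
    have h1 : ψ c = j (b c) := by rw [← hψι c]; exact (hj (ψ' c)).symm
    have h2 : j (a c) = φ c := by rw [← hφι c]; exact hj (φ' c)
    rw [h1, hπ c, map_mul, map_mul, map_inv, h2]
end

section
/- (Universality of Hall's group) Let U be a countable locally finite group such that every finite group admits an injective homomorphism into U and such that for every finite group C, any two injective homomorphisms from C into U are conjugate by an element of U. Then every countable locally finite group L admits an injective group homomorphism into U. -/
section HallAux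

variable {U L : Type} [Group U] [Group L]

/-- Extend an injective homomorphism on a finite subgroup `A` to a larger finite
subgroup `B`, using that `B` embeds in `U` and any two embeddings of the finite group
`A` into `U` are conjugate. -/
noncomputable def hallStep
    (hEmb : ∀ (C : Type) [Group C] [Finite C], ∃ φ : C →* U, Function.Injective φ)
    (hConj : ∀ (C : Type) [Group C] [Finite C] (φ ψ : C →* U),
      Function.Injective φ → Function.Injective ψ →
        ∃ u : U, ∀ c : C, ψ c = u * φ c * u⁻¹)
    (A B : Subgroup L) (hAB : A ≤ B) [Finite A] [Finite B]
    (f : ↥A →* U) (hf : Function.Injective f) :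
    {g : ↥B →* U // Function.Injective g ∧ ∀ a : ↥A, g ⟨a.1, hAB a.2⟩ = f a} := by
  classical
  set ψ := (hEmb (↥B)).choose with hψdef
  have hψinj : Function.Injective ψ := (hEmb (↥B)).choose_spec
  have hφinj : Function.Injective (ψ.comp (Subgroup.inclusion hAB)) :=
    hψinj.comp (Subgroup.inclusion_injective hAB)
  set u := (hConj (↥A) (ψ.comp (Subgroup.inclusion hAB)) f hφinj hf).choose with hudef
  have hu := (hConj (↥A) (ψ.comp (Subgroup.inclusion hAB)) f hφinj hf).choose_spec
  refine ⟨(MulAut.conj u).toMonoidHom.comp ψ, ?_, ?_⟩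
  · exact (MulAut.conj u).injective.comp hψinj
  · intro a
    have h := hu a
    simp only [MonoidHom.comp_apply, MulEquiv.coe_toMonoidHom, MulAut.conj_apply]
    rw [h]
    rfl

/-- The compatible chain of embeddings of an increasing sequence of finite subgroups. -/
noncomputable def hallChain
    (hEmb : ∀ (C : Type) [Group C] [Finite C], ∃ φ : C →* U, Function.Injective φ)
    (hConj : ∀ (C : Type) [Group C] [Finite C] (φ ψ : C →* U),
      Function.Injective φ → Function.Injective ψ →
        ∃ u : U, ∀ c : C, ψ c = u * φ c * u⁻¹)
    (K : ℕ → Subgroup L) (hK : ∀ n, K n ≤ K (n + 1)) (hFin : ∀ n, Finite (K n)) :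
    ∀ n, {f : ↥(K n) →* U // Function.Injective f}
  | 0 =>
    haveI := hFin 0
    ⟨(hEmb (↥(K 0))).choose, (hEmb (↥(K 0))).choose_spec⟩
  | n + 1 =>
    haveI := hFin n
    haveI := hFin (n + 1)
    let p := hallChain hEmb hConj K hK hFin n
    let s := hallStep hEmb hConj (K n) (K (n + 1)) (hK n) p.1 p.2
    ⟨s.1, s.2.1⟩

lemma hallChain_succ
    (hEmb : ∀ (C : Type) [Group C] [Finite C], ∃ φ : C →* U, Function.Injective φ)
    (hConj : ∀ (C : Type) [Group C] [Finite C] (φ ψ : C →* U),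
      Function.Injective φ → Function.Injective ψ →
        ∃ u : U, ∀ c : C, ψ c = u * φ c * u⁻¹)
    (K : ℕ → Subgroup L) (hK : ∀ n, K n ≤ K (n + 1)) (hFin : ∀ n, Finite (K n))
    (n : ℕ) (a : ↥(K n)) :
    (hallChain hEmb hConj K hK hFin (n + 1)).1 ⟨a.1, hK n a.2⟩ =
      (hallChain hEmb hConj K hK hFin n).1 a := by
  haveI := hFin n
  haveI := hFin (n + 1)
  exact (hallStep hEmb hConj (K n) (K (n + 1)) (hK n)
    (hallChain hEmb hConj K hK hFin n).1 (hallChain hEmb hConj K hK hFin n).2).2.2 a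

end HallAux

/-- Universality of Hall's group: if `U` is a countable locally finite group into which
every finite group embeds, and any two embeddings of a finite group into `U` are
conjugate in `U`, then every countable locally finite group embeds into `U`. -/
theorem hall_group_universal (U : Type) [Group U] [Countable U]
    (hLF : ∀ S : Subgroup U, S.FG → Finite S)
    (hEmb : ∀ (C : Type) [Group C] [Finite C], ∃ φ : C →* U, Function.Injective φ)
    (hConj : ∀ (C : Type) [Group C] [Finite C] (φ ψ : C →* U),
      Function.Injective φ → Function.Injective ψ →
        ∃ u : U, ∀ c : C, ψ c = u * φ c * u⁻¹)
    (L : Type) [Group L] [Countable L]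
    (hL : ∀ S : Subgroup L, S.FG → Finite S) :
    ∃ ι : L →* U, Function.Injective ι := by
  classical
  have : Nonempty L := ⟨1⟩
  obtain ⟨e, he⟩ := exists_surjective_nat L
  -- the increasing chain of finitely generated (hence finite) subgroups
  set K : ℕ → Subgroup L := fun n => Subgroup.closure (e '' Set.Iio n) with hKdef
  have hKmono : Monotone K := fun m n hmn =>
    Subgroup.closure_mono (Set.image_mono (Set.Iio_subset_Iio hmn))
  have hKsucc : ∀ n, K n ≤ K (n + 1) := fun n => hKmono (Nat.le_succ n)
  have hFin : ∀ n, Finite (K n) := by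
    intro n
    exact hL (K n) ⟨((Set.finite_Iio n).image e).toFinset, by
      simp [hKdef]⟩
  -- every element is in some K n
  have hmem : ∀ x : L, x ∈ K ((he x).choose + 1) := by
    intro x
    apply Subgroup.subset_closure
    exact ⟨(he x).choose, by simp [Nat.lt_succ_self], (he x).choose_spec⟩
  set d : L → ℕ := fun x => (he x).choose + 1 with hddef
  set F := hallChain hEmb hConj K hKsucc hFin with hFdef
  -- compatibility of the chain
  have compat : ∀ (n n' : ℕ), n ≤ n' → ∀ (x : L) (hx : x ∈ K n) (hx' : x ∈ K n'),
      (F n').1 ⟨x, hx'⟩ = (F n).1 ⟨x, hx⟩ := by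
    intro n n' hnn'
    induction n', hnn' using Nat.le_induction with
    | base => intro x hx hx'; rfl
    | succ m hm ih =>
      intro x hx hx'
      have hxm : x ∈ K m := hKmono hm hx
      have h1 : (F (m + 1)).1 ⟨x, hx'⟩ = (F m).1 ⟨x, hxm⟩ :=
        hallChain_succ hEmb hConj K hKsucc hFin m ⟨x, hxm⟩
      rw [h1, ih x hx hxm]
  -- the glued homomorphism
  refine ⟨{ toFun := fun x => (F (d x)).1 ⟨x, hmem x⟩, map_one' := ?_, map_mul' := ?_ }, ?_⟩
  · show (F (d 1)).1 ⟨(1 : L), hmem 1⟩ = 1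
    rw [show (⟨(1 : L), hmem 1⟩ : ↥(K (d 1))) = 1 from rfl, map_one]
  · intro x y
    set N := max (d (x * y)) (max (d x) (d y)) with hN
    have hxN : x ∈ K N := hKmono (le_max_of_le_right (le_max_left _ _)) (hmem x)
    have hyN : y ∈ K N := hKmono (le_max_of_le_right (le_max_right _ _)) (hmem y)
    have hxyN : x * y ∈ K N := mul_mem hxN hyN
    show (F (d (x * y))).1 ⟨x * y, hmem (x * y)⟩ =
      (F (d x)).1 ⟨x, hmem x⟩ * (F (d y)).1 ⟨y, hmem y⟩
    rw [← compat (d (x * y)) N (le_max_left _ _) (x * y) (hmem (x * y)) hxyN,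
      ← compat (d x) N (le_max_of_le_right (le_max_left _ _)) x (hmem x) hxN,
      ← compat (d y) N (le_max_of_le_right (le_max_right _ _)) y (hmem y) hyN]
    have : ((⟨x * y, hxyN⟩ : ↥(K N))) = ⟨x, hxN⟩ * ⟨y, hyN⟩ := rfl
    rw [this, map_mul]
  · intro x y hxy
    simp only [MonoidHom.coe_mk, OneHom.coe_mk] at hxy
    set N := max (d x) (d y) with hN
    have hxN : x ∈ K N := hKmono (le_max_left _ _) (hmem x)
    have hyN : y ∈ K N := hKmono (le_max_right _ _) (hmem y)
    have h : (F N).1 ⟨x, hxN⟩ = (F N).1 ⟨y, hyN⟩ := by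
      rw [compat (d x) N (le_max_left _ _) x (hmem x) hxN,
        compat (d y) N (le_max_right _ _) y (hmem y) hyN]
      exact hxy
    have := (F N).2 h
    exact congrArg Subtype.val this
end

section
/- (Uniqueness of Hall's universal group) Let U₁ and U₂ be countable locally finite groups, each with the properties that every finite group admits an injective homomorphism into it and that any two injective homomorphisms from a finite group into it are conjugate by an element of the group. Then U₁ and U₂ are isomorphic as groups. -/
/-- A partial isomorphism: a finite subgroup of `G` with an injective hom into `H`. -/
structure PIso (G H : Type) [Group G] [Group H] where
  A : Subgroup G
  fin : Finite A
  f : A →* H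
  inj : Function.Injective f

namespace PIso

variable {G H : Type} [Group G] [Group H]

/-- `Q` extends `P`. -/
def Ext (P Q : PIso G H) : Prop :=
  ∀ a (ha : a ∈ P.A), ∃ ha' : a ∈ Q.A, Q.f ⟨a, ha'⟩ = P.f ⟨a, ha⟩

theorem Ext.refl (P : PIso G H) : P.Ext P := fun _ ha => ⟨ha, rfl⟩

theorem Ext.trans {P Q R : PIso G H} (h1 : P.Ext Q) (h2 : Q.Ext R) : P.Ext R := by
  intro a ha
  obtain ⟨h1', e1⟩ := h1 a ha
  obtain ⟨h2', e2⟩ := h2 a h1'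
  exact ⟨h2', e2.trans e1⟩

theorem step1 (hLF : ∀ S : Subgroup G, S.FG → Finite S)
    (hEmb : ∀ (C : Type) [Group C] [Finite C], ∃ φ : C →* H, Function.Injective φ)
    (hConj : ∀ (C : Type) [Group C] [Finite C] (φ ψ : C →* H),
      Function.Injective φ → Function.Injective ψ →
        ∃ u : H, ∀ c : C, ψ c = u * φ c * u⁻¹)
    (P : PIso G H) (a : G) :
    ∃ Q : PIso G H, P.Ext Q ∧ a ∈ Q.A := by
  haveI := P.fin
  set A' : Subgroup G := Subgroup.closure ((P.A : Set G) ∪ {a}) with hA'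
  have hfinA' : Finite A' :=
    hLF A' ((Subgroup.fg_iff _).2 ⟨_, rfl, ((P.A : Set G).toFinite).union (Set.finite_singleton a)⟩)
  have hle : P.A ≤ A' := fun x hx => Subgroup.subset_closure (Or.inl hx)
  obtain ⟨φ, hφ⟩ := hEmb A'
  have hinj : Function.Injective (φ.comp (Subgroup.inclusion hle)) :=
    hφ.comp (Subgroup.inclusion_injective hle)
  obtain ⟨u, hu⟩ := hConj (↥P.A) (φ.comp (Subgroup.inclusion hle)) P.f hinj P.inj
  refine ⟨⟨A', hfinA', (MulAut.conj u).toMonoidHom.comp φ,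
    (MulAut.conj u).injective.comp hφ⟩, ?_, Subgroup.subset_closure (Or.inr rfl)⟩
  intro x hx
  refine ⟨hle hx, ?_⟩
  have := hu ⟨x, hx⟩
  simp at this ⊢
  exact this.symm

theorem step2 (hLF : ∀ S : Subgroup H, S.FG → Finite S)
    (hEmb : ∀ (C : Type) [Group C] [Finite C], ∃ φ : C →* G, Function.Injective φ)
    (hConj : ∀ (C : Type) [Group C] [Finite C] (φ ψ : C →* G),
      Function.Injective φ → Function.Injective ψ →
        ∃ u : G, ∀ c : C, ψ c = u * φ c * u⁻¹)
    (P : PIso G H) (b : H) :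
    ∃ Q : PIso G H, P.Ext Q ∧ b ∈ Q.f.range := by
  haveI := P.fin
  set B' : Subgroup H := Subgroup.closure ((P.f.range : Set H) ∪ {b}) with hB'
  have hrfin : (P.f.range : Set H).Finite := by
    rw [MonoidHom.coe_range]; exact Set.finite_range _
  have hfinB' : Finite B' :=
    hLF B' ((Subgroup.fg_iff _).2 ⟨_, rfl, hrfin.union (Set.finite_singleton b)⟩)
  have hmem : ∀ x : P.A, P.f x ∈ B' := fun x =>
    Subgroup.subset_closure (Or.inl ⟨x, rfl⟩)
  set ftil : ↥P.A →* ↥B' := P.f.codRestrict B' hmem with hftil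
  obtain ⟨g, hg⟩ := hEmb B'
  have hinj : Function.Injective (g.comp ftil) := by
    refine hg.comp ?_
    intro x y hxy
    apply P.inj
    have : (ftil x : H) = (ftil y : H) := congrArg _ hxy
    simpa [hftil] using this
  obtain ⟨u, hu⟩ := hConj (↥P.A) (g.comp ftil) P.A.subtype hinj (Subgroup.subtype_injective _)
  set g' : ↥B' →* G := (MulAut.conj u).toMonoidHom.comp g with hg'def
  have hg' : Function.Injective g' := (MulAut.conj u).injective.comp hg
  have hfix : ∀ x : P.A, g' (ftil x) = (x : G) := by
    intro x
    have := hu x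
    simpa [hg'def] using this.symm
  have hQfin : Finite g'.range := by
    have : (g'.range : Set G).Finite := by
      rw [MonoidHom.coe_range]; exact Set.finite_range _
    exact this.to_subtype
  set E : ↥B' ≃* g'.range := MonoidHom.ofInjective hg' with hE
  set Qf : ↥g'.range →* H := B'.subtype.comp E.symm.toMonoidHom with hQf
  have hQinj : Function.Injective Qf := (Subgroup.subtype_injective _).comp E.symm.injective
  have hval : ∀ (y : ↥B') (h : g' y ∈ g'.range), Qf ⟨g' y, h⟩ = (y : H) := by
    intro y h
    have : E.symm ⟨g' y, h⟩ = y := by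
      rw [MulEquiv.symm_apply_eq]
      exact Subtype.ext (by simp [hE, MonoidHom.ofInjective_apply])
    simp [hQf, this]
  refine ⟨⟨g'.range, hQfin, Qf, hQinj⟩, ?_, ?_⟩
  · intro x hx
    have hx' : x ∈ g'.range := ⟨ftil ⟨x, hx⟩, hfix ⟨x, hx⟩⟩
    refine ⟨hx', ?_⟩
    have h1 : Qf ⟨g' (ftil ⟨x, hx⟩), ⟨_, rfl⟩⟩ = ((ftil ⟨x, hx⟩ : ↥B') : H) := hval _ _
    have h2 : (⟨g' (ftil ⟨x, hx⟩), ⟨_, rfl⟩⟩ : ↥g'.range) = ⟨x, hx'⟩ :=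
      Subtype.ext (hfix ⟨x, hx⟩)
    rw [h2] at h1
    simpa [hftil] using h1
  · have hb : b ∈ B' := Subgroup.subset_closure (Or.inr rfl)
    exact ⟨⟨g' ⟨b, hb⟩, ⟨_, rfl⟩⟩, hval ⟨b, hb⟩ _⟩

end PIso

/-- Uniqueness of Hall's universal group: any two countable locally finite groups, each
containing every finite group and in which any two embeddings of a finite group are
conjugate, are isomorphic. -/
theorem hall_group_unique (U₁ U₂ : Type) [Group U₁] [Group U₂]
    [Countable U₁] [Countable U₂]
    (hLF₁ : ∀ S : Subgroup U₁, S.FG → Finite S)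
    (hLF₂ : ∀ S : Subgroup U₂, S.FG → Finite S)
    (hEmb₁ : ∀ (C : Type) [Group C] [Finite C], ∃ φ : C →* U₁, Function.Injective φ)
    (hEmb₂ : ∀ (C : Type) [Group C] [Finite C], ∃ φ : C →* U₂, Function.Injective φ)
    (hConj₁ : ∀ (C : Type) [Group C] [Finite C] (φ ψ : C →* U₁),
      Function.Injective φ → Function.Injective ψ →
        ∃ u : U₁, ∀ c : C, ψ c = u * φ c * u⁻¹)
    (hConj₂ : ∀ (C : Type) [Group C] [Finite C] (φ ψ : C →* U₂),
      Function.Injective φ → Function.Injective ψ →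
        ∃ u : U₂, ∀ c : C, ψ c = u * φ c * u⁻¹) :
    Nonempty (U₁ ≃* U₂) := by
  haveI : Nonempty U₁ := ⟨1⟩
  haveI : Nonempty U₂ := ⟨1⟩
  obtain ⟨g₁, hg₁⟩ := exists_surjective_nat U₁
  obtain ⟨g₂, hg₂⟩ := exists_surjective_nat U₂
  have half : ∀ (P : PIso U₁ U₂) (n : ℕ),
      ∃ Q, P.Ext Q ∧ g₁ n ∈ Q.A ∧ g₂ n ∈ Q.f.range := by
    intro P n
    obtain ⟨Q₁, h1, ha⟩ := PIso.step1 hLF₁ hEmb₂ hConj₂ P (g₁ n)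
    obtain ⟨Q₂, h2, hb⟩ := PIso.step2 hLF₂ hEmb₁ hConj₁ Q₁ (g₂ n)
    obtain ⟨ha', -⟩ := h2 _ ha
    exact ⟨Q₂, h1.trans h2, ha', hb⟩
  choose nxt hext hmem1 hmem2 using half
  set ch : ℕ → PIso U₁ U₂ :=
    fun n => Nat.rec ⟨⊥, inferInstance, 1, Function.injective_of_subsingleton _⟩
      (fun n P => nxt P n) n with hch
  have chsucc : ∀ n, (ch n).Ext (ch (n + 1)) := fun n => hext (ch n) n
  have chmono : ∀ m n, m ≤ n → (ch m).Ext (ch n) := by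
    intro m n h
    induction n, h using Nat.le_induction with
    | base => exact PIso.Ext.refl _
    | succ n hn ih => exact ih.trans (chsucc n)
  have key : ∀ a m n (hm : a ∈ (ch m).A) (hn : a ∈ (ch n).A),
      (ch m).f ⟨a, hm⟩ = (ch n).f ⟨a, hn⟩ := by
    intro a m n hm hn
    obtain ⟨hm', em⟩ := chmono m (max m n) (le_max_left m n) a hm
    obtain ⟨hn', en⟩ := chmono n (max m n) (le_max_right m n) a hn
    rw [← em, ← en]
  have mem : ∀ a : U₁, ∃ n, a ∈ (ch n).A := by
    intro a
    obtain ⟨n, rfl⟩ := hg₁ a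
    exact ⟨n + 1, hmem1 (ch n) n⟩
  choose idx hidx using mem
  set F : U₁ → U₂ := fun a => (ch (idx a)).f ⟨a, hidx a⟩ with hF
  have Fval : ∀ a n (hn : a ∈ (ch n).A), F a = (ch n).f ⟨a, hn⟩ :=
    fun a n hn => key a _ n (hidx a) hn
  have hmul : ∀ a b : U₁, F (a * b) = F a * F b := by
    intro a b
    set n := max (idx a) (idx b) with hn
    obtain ⟨ha, -⟩ := chmono (idx a) n (le_max_left _ _) a (hidx a)
    obtain ⟨hb, -⟩ := chmono (idx b) n (le_max_right _ _) b (hidx b)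
    have hab : a * b ∈ (ch n).A := mul_mem ha hb
    rw [Fval (a * b) n hab, Fval a n ha, Fval b n hb, ← map_mul]; rfl
  have hinj : Function.Injective F := by
    intro a b h
    set n := max (idx a) (idx b) with hn
    obtain ⟨ha, -⟩ := chmono (idx a) n (le_max_left _ _) a (hidx a)
    obtain ⟨hb, -⟩ := chmono (idx b) n (le_max_right _ _) b (hidx b)
    rw [Fval a n ha, Fval b n hb] at h
    have := (ch n).inj h
    exact congrArg Subtype.val this
  have hsurj : Function.Surjective F := by
    intro b
    obtain ⟨n, rfl⟩ := hg₂ b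
    obtain ⟨x, hx⟩ := hmem2 (ch n) n
    refine ⟨(x : U₁), ?_⟩
    rw [Fval (x : U₁) (n + 1) x.2]
    simpa using hx
  exact ⟨MulEquiv.ofBijective (MonoidHom.mk' F hmul) ⟨hinj, hsurj⟩⟩
end

section
/- Let p : E → X be a covering map between path-connected topological spaces, let e ∈ E, and set x = p(e). Then the induced homomorphism on fundamental groups π₁(E, e) → π₁(X, x) is injective, and if the fiber p⁻¹(x) is finite of cardinality n, then the image of this homomorphism is a subgroup of π₁(X, x) of index n. -/
open scoped FundamentalGroupoid

/-- The homomorphism on fundamental groups induced by a continuous map `p : E → X`,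
sending the homotopy class of a loop at `e` to the class of its image under `p`. -/
noncomputable def inducedPi1Hom {E X : Type} [TopologicalSpace E] [TopologicalSpace X]
    (p : C(E, X)) (e : E) :
    FundamentalGroup E e →* FundamentalGroup X (p e) :=
  CategoryTheory.Functor.mapEnd (FundamentalGroupoid.mk e)
    (πₘ (TopCat.ofHom p))


open unitInterval Set

noncomputable section

namespace CoverLift

variable {E X : Type*} [TopologicalSpace E] [TopologicalSpace X] {p : E → X}

/-- clamp `min t c` back into `I`. -/
def clampCM (c : ℝ) : C(I, I) :=
  ⟨fun t => Set.projIcc (0:ℝ) 1 zero_le_one (min ↑t c),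
    continuous_projIcc.comp (continuous_subtype_val.min continuous_const)⟩

lemma clampCM_of_le {c : ℝ} {t : I} (h : (t : ℝ) ≤ c) : clampCM c t = t := by
  refine Subtype.ext ?_
  simp only [clampCM, ContinuousMap.coe_mk, min_eq_left h]
  rw [Set.projIcc_of_mem zero_le_one t.2]

lemma clampCM_eq_of_mem {c : ℝ} (hc : c ∈ Icc (0:ℝ) 1) {t : I} (h : c ≤ (t:ℝ)) :
    clampCM c t = ⟨c, hc⟩ := by
  refine Subtype.ext ?_
  simp only [clampCM, ContinuousMap.coe_mk, min_eq_right h]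
  rw [Set.projIcc_of_mem zero_le_one hc]

lemma clampCM_zero (t : I) : clampCM 0 t = 0 :=
  clampCM_eq_of_mem ⟨le_refl _, zero_le_one⟩ t.2.1

lemma continuousOn_if_le {α β : Type*} [TopologicalSpace α] [TopologicalSpace β]
    {s : Set α} {r : α → ℝ} {c : ℝ} {f g : α → β}
    (hf : ContinuousOn f s) (hg : ContinuousOn g s) (hr : Continuous r)
    (hfg : ∀ x ∈ s, r x = c → f x = g x) :
    ContinuousOn (fun x => if r x ≤ c then f x else g x) s := by
  rw [continuousOn_iff_continuous_restrict] at hf hg ⊢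
  exact Continuous.if_le hf hg (hr.comp continuous_subtype_val) continuous_const
    fun x hx => hfg x x.2 hx

theorem exists_localLift (hp : IsCoveringMap p) {A : Type*} [TopologicalSpace A]
    (H : C(A × I, X)) (a : A) :
    ∃ N : Set A, IsOpen N ∧ a ∈ N ∧ ∀ f : A → E, ContinuousOn f N →
      (∀ b ∈ N, p (f b) = H (b, 0)) →
      ∃ g : A × I → E, ContinuousOn g (N ×ˢ (univ : Set I)) ∧
        (∀ b ∈ N, ∀ t, p (g (b, t)) = H (b, t)) ∧ (∀ b ∈ N, g (b, 0) = f b) := by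
  classical
  set sl : C(I, X) := H.comp ⟨fun t => (a, t), by fun_prop⟩ with hsl
  by_cases h0 : ∃ e₀ : E, p e₀ = H (a, 0)
  swap
  · exact ⟨univ, isOpen_univ, trivial, fun f _ hf => absurd ⟨f a, hf a trivial⟩ h0⟩
  obtain ⟨e₀, he₀⟩ := h0
  obtain ⟨Γ, hΓ, -⟩ := hp.exists_path_lifts sl e₀ he₀.symm
  have hne : ∀ i : I, Nonempty (p ⁻¹' {sl i}) := fun i => ⟨⟨Γ i, congrFun hΓ i⟩⟩
  -- Lebesgue number for the cover of I by preimages of evenly covered sets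
  obtain ⟨δ, hδ, hball⟩ := lebesgue_number_lemma_of_metric (isCompact_univ (X := I))
    (c := fun i : I => sl ⁻¹' (hp (sl i)).toTrivialization.baseSet)
    (fun i => sl.continuous.isOpen_preimage _ (hp (sl i)).toTrivialization.open_baseSet)
    (fun t _ => Set.mem_iUnion.2 ⟨t, (hp (sl t)).mem_toTrivialization_baseSet⟩)
  obtain ⟨n, hn⟩ := exists_nat_one_div_lt hδ
  set m : ℕ := n + 1 with hm
  have hm0 : (0:ℝ) < m := by positivity
  have hmδ : 1 / (m:ℝ) < δ := by exact_mod_cast hn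
  -- segments
  set S : ℕ → Set I := fun k => {t : I | (k:ℝ)/m ≤ ↑t ∧ (t:ℝ) ≤ (k+1)/m} with hS
  have hSclosed : ∀ k, IsClosed (S k) :=
    fun k => (isClosed_le continuous_const continuous_subtype_val).inter
      (isClosed_le continuous_subtype_val continuous_const)
  -- choose the evenly covered set for each segment
  have hchoose : ∀ k : ℕ, ∃ i : I, k < m →
      ∀ t ∈ S k, sl t ∈ (hp (sl i)).toTrivialization.baseSet := by
    intro k
    by_cases hk : k < m
    · have hmem : (k:ℝ)/m ∈ Icc (0:ℝ) 1 := by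
        constructor
        · positivity
        · rw [div_le_one hm0]; exact_mod_cast hk.le
      set q : I := ⟨(k:ℝ)/m, hmem⟩ with hqdef
      obtain ⟨i, hi⟩ := hball q trivial
      refine ⟨i, fun _ t ht => hi ?_⟩
      have e1 : ((k:ℝ)+1)/m = (k:ℝ)/m + 1/m := add_div _ _ _
      have ht1 : (k:ℝ)/m ≤ (t:ℝ) := ht.1
      have ht2 : (t:ℝ) ≤ (k+1)/m := ht.2
      rw [Metric.mem_ball, Subtype.dist_eq, Real.dist_eq, abs_sub_lt_iff]
      have hq : (q:ℝ) = (k:ℝ)/m := rfl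
      constructor <;> rw [hq] <;> linarith
    · exact ⟨0, fun h => absurd h hk⟩
  choose idx hidx using hchoose
  -- tube neighborhoods
  have htube : ∀ k : ℕ, ∃ u : Set A, IsOpen u ∧ a ∈ u ∧ (k < m →
      ∀ b ∈ u, ∀ t ∈ S k, H (b, t) ∈ (hp (sl (idx k))).toTrivialization.baseSet) := by
    intro k
    by_cases hk : k < m
    · have hsub : ({a} ×ˢ S k : Set (A × I)) ⊆
          H ⁻¹' (hp (sl (idx k))).toTrivialization.baseSet := by
        rintro ⟨b, t⟩ ⟨hb, ht⟩
        rcases hb with rfl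
        exact hidx k hk t ht
      obtain ⟨u, v, hu, hv, hau, hSv, huv⟩ := generalized_tube_lemma isCompact_singleton
        ((hSclosed k).isCompact) (H.continuous.isOpen_preimage _
          (hp (sl (idx k))).toTrivialization.open_baseSet) hsub
      exact ⟨u, hu, hau rfl, fun _ b hb t ht => huv ⟨hb, hSv ht⟩⟩
    · exact ⟨univ, isOpen_univ, trivial, fun h => absurd h hk⟩
  choose u hu hau hucov using htube
  refine ⟨⋂ k ∈ Finset.range m, u k, isOpen_biInter_finset (fun k _ => hu k),
    Set.mem_biInter (fun k _ => hau k), ?_⟩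
  intro f hfc hf0
  set N : Set A := ⋂ k ∈ Finset.range m, u k with hN
  have hNsub : ∀ k, k < m → N ⊆ u k := fun k hk =>
    Set.biInter_subset_of_mem (Finset.mem_range.2 hk)
  -- main induction: lift up to time k/m
  have key : ∀ k : ℕ, k ≤ m →
      ∃ g : A × I → E, ContinuousOn g (N ×ˢ (univ : Set I)) ∧
        (∀ b ∈ N, ∀ t, p (g (b, t)) = H (b, clampCM ((k:ℝ)/m) t)) ∧
        (∀ b ∈ N, g (b, 0) = f b) := by
    intro k
    induction k with
    | zero =>
      intro _
      refine ⟨fun z => f z.1, hfc.comp continuous_fst.continuousOn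
        (fun z hz => hz.1), fun b hb t => ?_, fun b _ => rfl⟩
      have h0 : ((0:ℕ):ℝ)/m = 0 := by norm_num
      rw [h0, clampCM_zero, hf0 b hb]
    | succ k ih =>
      intro hkm
      obtain ⟨g, hgc, hgp, hg0⟩ := ih (Nat.le_of_succ_le hkm)
      have hk : k < m := hkm
      set c₀ : ℝ := (k:ℝ)/m with hc₀
      set c₁ : ℝ := ((k:ℝ)+1)/m with hc₁
      have hcast : (((k+1:ℕ)):ℝ)/m = c₁ := by rw [Nat.cast_add, Nat.cast_one]
      have hc₀0 : 0 ≤ c₀ := by positivity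
      have hc₀1 : c₀ ≤ 1 := by rw [hc₀, div_le_one hm0]; exact_mod_cast hk.le
      have hc₁1 : c₁ ≤ 1 := by
        rw [hc₁, div_le_one hm0]; exact_mod_cast hkm
      have hc01 : c₀ ≤ c₁ := by
        rw [hc₀, hc₁]; gcongr; linarith
      set T := (hp (sl (idx k))).toTrivialization with hT
      set tk : I := ⟨c₀, ⟨hc₀0, hc₀1⟩⟩ with htk
      set cl2 : C(I, I) := ⟨fun t => Set.projIcc (0:ℝ) 1 zero_le_one (max c₀ (min ↑t c₁)),
        continuous_projIcc.comp (continuous_const.max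
          (continuous_subtype_val.min continuous_const))⟩ with hcl2
      have hcl2coe : ∀ t : I, (cl2 t : ℝ) = max c₀ (min ↑t c₁) := by
        intro t
        have hmem : max c₀ (min ↑t c₁) ∈ Icc (0:ℝ) 1 := by
          constructor
          · exact le_trans hc₀0 (le_max_left _ _)
          · apply max_le hc₀1 (le_trans (min_le_right _ _) hc₁1)
        rw [show cl2 t = Set.projIcc (0:ℝ) 1 zero_le_one (max c₀ (min ↑t c₁)) from rfl,
          Set.projIcc_of_mem zero_le_one hmem]
      have hcl2S : ∀ t : I, cl2 t ∈ S k := by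
        intro t
        constructor
        · rw [hcl2coe t]; exact le_max_left _ _
        · rw [hcl2coe t]
          exact max_le hc01 (min_le_right _ _)
      have hcl2tk : cl2 tk = tk := by
        refine Subtype.ext ?_
        rw [hcl2coe tk]
        have : (tk:ℝ) = c₀ := rfl
        rw [this, min_eq_left hc01, max_self]
      have hcl2eq : ∀ t : I, c₀ ≤ (t:ℝ) → cl2 t = clampCM c₁ t := by
        intro t ht
        refine Subtype.ext ?_
        rw [hcl2coe t]
        have hmem : min ↑t c₁ ∈ Icc (0:ℝ) 1 := by
          constructor
          · exact le_min t.2.1 (le_trans hc₀0 hc01)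
          · exact le_trans (min_le_right _ _) hc₁1
        have : (clampCM c₁ t : ℝ) = min ↑t c₁ := by
          show (Set.projIcc (0:ℝ) 1 zero_le_one (min ↑t c₁) : ℝ) = _
          rw [Set.projIcc_of_mem zero_le_one hmem]
        rw [this, max_eq_right (le_min ht hc01)]
      -- source membership of the matching point
      have hyS : ∀ b ∈ N, g (b, tk) ∈ T.source := by
        intro b hb
        rw [T.mem_source]
        have h1 : p (g (b, tk)) = H (b, tk) := by
          rw [hgp b hb tk, clampCM_of_le (le_refl c₀)]
        rw [h1]
        exact hucov k hk b (hNsub k hk hb) tk ⟨le_refl _, hc01⟩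
      refine ⟨fun z => if (z.2 : ℝ) ≤ c₀ then g z
        else T.toOpenPartialHomeomorph.symm (H (z.1, cl2 z.2), (T (g (z.1, tk))).2),
        ?_, ?_, ?_⟩
      · -- continuity
        apply continuousOn_if_le hgc ?_ (continuous_subtype_val.comp continuous_snd)
        · -- boundary agreement
          rintro ⟨b, t⟩ hz hteq
          dsimp only
          have hteq' : t = tk := Subtype.ext hteq
          rw [hteq', hcl2tk]
          have h1 : p (g (b, tk)) = H (b, tk) := by
            rw [hgp b hz.1 tk, clampCM_of_le (le_refl c₀)]
          rw [← h1, T.symm_apply_mk_proj (hyS b hz.1)]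
        · -- continuity of the second branch
          have inner2 : ContinuousOn (fun z : A × I => g (z.1, tk)) (N ×ˢ univ) :=
            hgc.comp ((continuous_fst.prodMk continuous_const).continuousOn)
              (fun z hz => ⟨hz.1, trivial⟩)
          have inner3 : ContinuousOn (fun z : A × I => (T (g (z.1, tk))).2) (N ×ˢ univ) :=
            continuous_snd.comp_continuousOn
              ((T.toOpenPartialHomeomorph.continuousOn).comp inner2 (fun z hz => hyS z.1 hz.1))
          have innerH : Continuous (fun z : A × I => H (z.1, cl2 z.2)) :=
            H.continuous.comp (continuous_fst.prodMk (cl2.continuous.comp continuous_snd))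
          refine (T.toOpenPartialHomeomorph.continuousOn_symm).comp
            (innerH.continuousOn.prodMk inner3) ?_
          intro z hz
          rw [T.mem_target]
          exact hucov k hk z.1 (hNsub k hk hz.1) (cl2 z.2) (hcl2S z.2)
      · -- lifting property
        intro b hb t
        dsimp only
        by_cases ht : (t:ℝ) ≤ c₀
        · rw [if_pos ht, hgp b hb t, clampCM_of_le ht, hcast,
            clampCM_of_le (le_trans ht hc01)]
        · push_neg at ht
          rw [if_neg (not_le.2 ht), hcast, ← hcl2eq t ht.le]
          exact T.proj_symm_apply'
            (hucov k hk b (hNsub k hk hb) (cl2 t) (hcl2S t))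
      · -- initial condition
        intro b hb
        dsimp only
        rw [if_pos (show ((0:I):ℝ) ≤ c₀ from hc₀0), hg0 b hb]
  obtain ⟨g, hgc, hgp, hg0⟩ := key m le_rfl
  refine ⟨g, hgc, fun b hb t => ?_, hg0⟩
  rw [hgp b hb t, div_self hm0.ne', clampCM_of_le t.2.2]

theorem exists_lift (hp : IsCoveringMap p) {A : Type*} [TopologicalSpace A]
    (H : C(A × I, X)) (f : A → E) (hfc : Continuous f) (hf : ∀ a, p (f a) = H (a, 0)) :
    ∃ G : A × I → E, Continuous G ∧ (∀ z, p (G z) = H z) ∧ ∀ a, G (a, 0) = f a := by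
  choose N hNo hNm hN using fun a => exists_localLift hp H a
  choose g hgc hgp hg0 using fun a => hN a f hfc.continuousOn (fun b _ => hf b)
  refine ⟨fun z => g z.1 z, ?_, fun z => hgp z.1 z.1 (hNm z.1) z.2, fun a => hg0 a a (hNm a)⟩
  rw [continuous_iff_continuousAt]
  rintro ⟨b₀, t₀⟩
  have hslice : ∀ b ∈ N b₀, ∀ t : I, g b (b, t) = g b₀ (b, t) := by
    intro b hb
    have hfun : (fun t : I => g b (b, t)) = (fun t : I => g b₀ (b, t)) := by
      refine hp.eq_of_comp_eq ?_ ?_ ?_ 0 ?_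
      · exact (hgc b).comp_continuous (continuous_const.prodMk continuous_id)
          (fun t => ⟨hNm b, trivial⟩)
      · exact (hgc b₀).comp_continuous (continuous_const.prodMk continuous_id)
          (fun t => ⟨hb, trivial⟩)
      · funext t
        show p (g b (b, t)) = p (g b₀ (b, t))
        rw [hgp b b (hNm b) t, hgp b₀ b hb t]
      · show g b (b, 0) = g b₀ (b, 0)
        rw [hg0 b b (hNm b), hg0 b₀ b hb]
    exact fun t => congrFun hfun t
  have hopen : (N b₀) ×ˢ (univ : Set I) ∈ nhds (b₀, t₀) :=
    ((hNo b₀).prod isOpen_univ).mem_nhds ⟨hNm b₀, trivial⟩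
  have hev : ∀ᶠ z in nhds (b₀, t₀), g b₀ z = g z.1 z := by
    filter_upwards [hopen] with z hz
    exact (hslice z.1 hz.1 z.2).symm
  exact ContinuousAt.congr ((hgc b₀).continuousAt hopen) hev

/-- Lifting a path (as a continuous map on `I`). -/
theorem exists_lift_I (hp : IsCoveringMap p) (γ : C(I, X)) (e₀ : E) (he : p e₀ = γ 0) :
    ∃ g : C(I, E), (∀ t, p (g t) = γ t) ∧ g 0 = e₀ := by
  obtain ⟨G, hGc, hGp, hG0⟩ := exists_lift hp (A := Unit)
    (γ.comp ⟨Prod.snd, continuous_snd⟩) (fun _ => e₀) continuous_const (fun _ => he)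
  exact ⟨⟨fun t => G ((), t), hGc.comp (continuous_const.prodMk continuous_id)⟩,
    fun t => hGp ((), t), hG0 ()⟩

theorem lift_unique (hp : IsCoveringMap p) {g₁ g₂ : I → E} (h₁ : Continuous g₁)
    (h₂ : Continuous g₂) (h : ∀ t, p (g₁ t) = p (g₂ t)) (h0 : g₁ 0 = g₂ 0) : g₁ = g₂ :=
  hp.eq_of_comp_eq h₁ h₂ (funext h) 0 h0

/-- A choice of lift of a path. -/
def liftCM (hp : IsCoveringMap p) (γ : C(I, X)) (e₀ : E) (he : p e₀ = γ 0) : C(I, E) :=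
  (exists_lift_I hp γ e₀ he).choose

theorem liftCM_proj (hp : IsCoveringMap p) (γ : C(I, X)) (e₀ : E) (he : p e₀ = γ 0) (t : I) :
    p (liftCM hp γ e₀ he t) = γ t := (exists_lift_I hp γ e₀ he).choose_spec.1 t

theorem liftCM_zero (hp : IsCoveringMap p) (γ : C(I, X)) (e₀ : E) (he : p e₀ = γ 0) :
    liftCM hp γ e₀ he 0 = e₀ := (exists_lift_I hp γ e₀ he).choose_spec.2

theorem liftCM_eq (hp : IsCoveringMap p) (γ : C(I, X)) (e₀ : E) (he : p e₀ = γ 0)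
    (g : C(I, E)) (hg : ∀ t, p (g t) = γ t) (hg0 : g 0 = e₀) :
    ∀ t, liftCM hp γ e₀ he t = g t := by
  have := lift_unique hp (liftCM hp γ e₀ he).continuous g.continuous
    (fun t => by rw [liftCM_proj hp γ e₀ he t, hg t])
    (by rw [liftCM_zero, hg0])
  exact fun t => congrFun this t

/-- Lifting of homotopies of paths (rel endpoints). -/
theorem homotopy_lift (hp : IsCoveringMap p) {x y : X} {a b : Path x y}
    (h : Path.Homotopic a b) {ea eb : C(I, E)}
    (hpa : ∀ t, p (ea t) = a t) (hpb : ∀ t, p (eb t) = b t) (h0 : ea 0 = eb 0) :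
    ea 1 = eb 1 ∧ ∃ G : C(I × I, E), (∀ t, G (0, t) = ea t) ∧ (∀ t, G (1, t) = eb t) ∧
      (∀ s, G (s, 0) = ea 0) ∧ (∀ s, G (s, 1) = ea 1) := by
  obtain ⟨F⟩ := h
  -- swap coordinates: A-parameter is the time coordinate of the paths
  set K : C(I × I, X) := F.toContinuousMap.comp
    ⟨fun z : I × I => (z.2, z.1), (continuous_snd.prodMk continuous_fst)⟩ with hK
  have hK0 : ∀ t, K (t, 0) = a t := fun t => F.apply_zero t
  obtain ⟨G₀, hG₀c, hG₀p, hG₀0⟩ := exists_lift hp K ea ea.continuous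
    (fun t => by rw [hpa t, hK0 t])
  -- slices
  have hslice0 : ∀ s : I, G₀ (0, s) = ea 0 := by
    have := lift_unique hp (g₁ := fun s => G₀ (0, s)) (g₂ := fun _ => ea 0)
      (hG₀c.comp (continuous_const.prodMk continuous_id)) continuous_const
      (fun s => by
        rw [hG₀p (0, s), hpa 0]
        show K (0, s) = a 0
        rw [show K (0, s) = F (s, 0) from rfl, F.source s]
        exact a.source.symm)
      (by show G₀ (0, 0) = ea 0; rw [hG₀0 0])
    exact fun s => congrFun this s
  have hslice1 : ∀ s : I, G₀ (1, s) = ea 1 := by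
    have := lift_unique hp (g₁ := fun s => G₀ (1, s)) (g₂ := fun _ => ea 1)
      (hG₀c.comp (continuous_const.prodMk continuous_id)) continuous_const
      (fun s => by
        rw [hG₀p (1, s), hpa 1]
        show K (1, s) = a 1
        rw [show K (1, s) = F (s, 1) from rfl, F.target s]
        exact a.target.symm)
      (by show G₀ (1, 0) = ea 1; rw [hG₀0 1])
    exact fun s => congrFun this s
  have hsliceb : ∀ t : I, G₀ (t, 1) = eb t := by
    have := lift_unique hp (g₁ := fun t => G₀ (t, 1)) (g₂ := eb)
      (hG₀c.comp (continuous_id.prodMk continuous_const)) eb.continuous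
      (fun t => by
        rw [hG₀p (t, 1), hpb t]
        show K (t, 1) = b t
        rw [show K (t, 1) = F (1, t) from rfl, F.apply_one t]
        rfl)
      (by show G₀ (0, 1) = eb 0; rw [hslice0 1, h0])
    exact fun t => congrFun this t
  constructor
  · rw [← hsliceb 1, hslice1 1]
  · refine ⟨⟨fun z => G₀ (z.2, z.1), hG₀c.comp (continuous_snd.prodMk continuous_fst)⟩,
      ?_, ?_, ?_, ?_⟩
    · exact fun t => hG₀0 t
    · exact fun t => hsliceb t
    · exact fun s => hslice0 s
    · exact fun s => hslice1 s

attribute [local instance] Path.Homotopic.setoid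

variable (hp : IsCoveringMap p) {x : X}

/-- Transport in the fiber along a loop: endpoint of the lift starting at `f`. -/
def ltr (a : Path x x) (f : E) (hf : p f = x) : E :=
  liftCM hp a.toContinuousMap f (hf.trans a.source.symm) 1

lemma ltr_proj (a : Path x x) (f : E) (hf : p f = x) : p (ltr hp a f hf) = x :=
  (liftCM_proj hp a.toContinuousMap f (hf.trans a.source.symm) 1).trans a.target

lemma ltr_eq_lift (g : C(I, E)) (a : Path x x) (hg : ∀ t, p (g t) = a t)
    (hf : p (g 0) = x) : ltr hp a (g 0) hf = g 1 :=
  liftCM_eq hp a.toContinuousMap (g 0) (hf.trans a.source.symm) g hg rfl 1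

lemma ltr_eq_lift' (g : C(I, E)) (a : Path x x) (hg : ∀ t, p (g t) = a t)
    (f : E) (hf : p f = x) (h0 : g 0 = f) : ltr hp a f hf = g 1 := by
  subst h0
  exact ltr_eq_lift hp g a hg hf

lemma ltr_congr (a : Path x x) {f f' : E} (h : f = f') (hf : p f = x) (hf' : p f' = x) :
    ltr hp a f hf = ltr hp a f' hf' := by subst h; rfl

lemma ltr_homotopic (a b : Path x x) (h : Path.Homotopic a b) (f : E) (hf : p f = x) :
    ltr hp a f hf = ltr hp b f hf := by
  refine (homotopy_lift hp h
    (ea := liftCM hp a.toContinuousMap f (hf.trans a.source.symm))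
    (eb := liftCM hp b.toContinuousMap f (hf.trans b.source.symm))
    (fun t => liftCM_proj hp _ _ _ t) (fun t => liftCM_proj hp _ _ _ t) ?_).1
  rw [liftCM_zero, liftCM_zero]

lemma ltr_trans (a b : Path x x) (f : E) (hf : p f = x)
    (hf' : p (ltr hp a f hf) = x) :
    ltr hp (a.trans b) f hf = ltr hp b (ltr hp a f hf) hf' := by
  set g₁ : C(I, E) := liftCM hp a.toContinuousMap f (hf.trans a.source.symm) with hg₁
  set g₂ : C(I, E) := liftCM hp b.toContinuousMap (g₁ 1)
    (hf'.trans b.source.symm) with hg₂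
  set P₁ : Path f (g₁ 1) := ⟨g₁, liftCM_zero hp _ _ _, rfl⟩ with hP₁
  set P₂ : Path (g₁ 1) (g₂ 1) := ⟨g₂, liftCM_zero hp _ _ _, rfl⟩ with hP₂
  have hproj : ∀ t, p ((P₁.trans P₂) t) = (a.trans b) t := by
    intro t
    rw [Path.trans_apply, Path.trans_apply]
    split_ifs with h
    · exact liftCM_proj hp a.toContinuousMap f (hf.trans a.source.symm) _
    · exact liftCM_proj hp b.toContinuousMap (g₁ 1) (hf'.trans b.source.symm) _
  have h1 : ∀ t, liftCM hp (a.trans b).toContinuousMap f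
      (hf.trans (a.trans b).source.symm) t = (P₁.trans P₂) t :=
    liftCM_eq hp _ _ _ (P₁.trans P₂).toContinuousMap hproj (P₁.trans P₂).source
  show liftCM hp (a.trans b).toContinuousMap f (hf.trans (a.trans b).source.symm) 1 = _
  rw [h1 1]
  have h2 : (P₁.trans P₂) 1 = g₂ 1 := (P₁.trans P₂).target
  rw [h2]
  rfl

end CoverLift

section Main

open CategoryTheory FundamentalGroupoid CoverLift
open scoped FundamentalGroupoid

attribute [local instance] Path.Homotopic.setoid

variable {E X : Type} [TopologicalSpace E] [TopologicalSpace X]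
  (p : C(E, X)) (hp : IsCoveringMap ⇑p) (e : E)

lemma induced_hom (α : FundamentalGroup E e) :
    (inducedPi1Hom p e α)
      = (πₘ (TopCat.ofHom p)).map α := rfl

lemma induced_hom_mk (c : Path e e) (α : FundamentalGroup E e) (hc : α = ⟦c⟧) :
    (inducedPi1Hom p e α) = ⟦c.map p.continuous⟧ := by
  rw [induced_hom, hc]
  rfl

noncomputable def Phi : FundamentalGroup X (p e) → E := fun α =>
  Quotient.lift (fun a : Path (p e) (p e) => ltr hp a e rfl)
    (fun a b h => ltr_homotopic hp a b h e rfl) α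

lemma Phi_mk (α : FundamentalGroup X (p e)) (a : Path (p e) (p e)) (ha : α = ⟦a⟧) :
    Phi p hp e α = ltr hp a e rfl := by
  show Quotient.lift _ _ α = _
  rw [ha]
  rfl

lemma Phi_proj (α : FundamentalGroup X (p e)) : p (Phi p hp e α) = p e := by
  obtain ⟨a, ha⟩ := Quotient.exists_rep α
  rw [Phi_mk p hp e α a ha.symm]
  exact ltr_proj hp a e rfl

include hp in
theorem induced_injective : Function.Injective (inducedPi1Hom p e) := by
  rw [injective_iff_map_eq_one]
  intro α hα
  obtain ⟨c, hc⟩ := Quotient.exists_rep α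
  have h1 : (inducedPi1Hom p e α) = ⟦c.map p.continuous⟧ :=
    induced_hom_mk p e c α hc.symm
  have h2 : (⟦c.map p.continuous⟧ : Path.Homotopic.Quotient (p e) (p e))
      = ⟦Path.refl (p e)⟧ := by rw [← h1, hα]; rfl
  have h3 : Path.Homotopic (c.map p.continuous) (Path.refl (p e)) := Quotient.exact h2
  obtain ⟨-, G₁, hG0, hG1, hGs0, hGs1⟩ := homotopy_lift hp h3
    (ea := c.toContinuousMap) (eb := ContinuousMap.const I e)
    (fun t => rfl) (fun t => rfl) (by show c 0 = e; exact c.source)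
  have hhom : Path.Homotopy c (Path.refl e) :=
    { toContinuousMap := G₁
      map_zero_left := fun t => hG0 t
      map_one_left := fun t => hG1 t
      prop' := by
        intro s t ht
        rcases ht with rfl | ht
        · exact hGs0 s
        · rw [Set.mem_singleton_iff] at ht
          subst ht
          exact hGs1 s }
  have h4 : (⟦c⟧ : Path.Homotopic.Quotient e e) = ⟦Path.refl e⟧ := Quotient.sound ⟨hhom⟩
  exact hc.symm.trans h4

lemma phi_eq_iff (α β : FundamentalGroup X (p e)) :
    Phi p hp e α = Phi p hp e β ↔ β⁻¹ * α ∈ (inducedPi1Hom p e).range := by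
  obtain ⟨a, ha⟩ := Quotient.exists_rep α
  obtain ⟨b, hb⟩ := Quotient.exists_rep β
  have hβinv : (β⁻¹) = (⟦b.symm⟧ : Path.Homotopic.Quotient (p e) (p e)) := by
    rw [← hb]
    rfl
  constructor
  · intro h
    rw [Phi_mk p hp e α a ha.symm, Phi_mk p hp e β b hb.symm] at h
    set P₁ : Path e (ltr hp a e rfl) :=
      ⟨liftCM hp a.toContinuousMap e (a.source.symm), liftCM_zero hp _ _ _, rfl⟩ with hP₁
    set P₂ : Path e (ltr hp a e rfl) :=
      ⟨liftCM hp b.toContinuousMap e (b.source.symm), liftCM_zero hp _ _ _, h.symm⟩ with hP₂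
    set γ : Path e e := P₁.trans P₂.symm with hγ
    have pathEq : γ.map p.continuous = a.trans b.symm := by
      ext t
      show p (γ t) = (a.trans b.symm) t
      rw [hγ, Path.trans_apply, Path.trans_apply]
      split_ifs with ht
      · exact liftCM_proj hp a.toContinuousMap e (a.source.symm) _
      · show p (P₂.symm _) = b.symm _
        rw [Path.symm_apply, Path.symm_apply]
        exact liftCM_proj hp b.toContinuousMap e (b.source.symm) _
    refine ⟨⟦γ⟧, ?_⟩
    have h5 : (inducedPi1Hom p e ⟦γ⟧) = ⟦γ.map p.continuous⟧ :=
      induced_hom_mk p e γ _ rfl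
    rw [h5, pathEq, hβinv, ← ha]
    rfl
  · rintro ⟨g, hg⟩
    obtain ⟨c, hc⟩ := Quotient.exists_rep g
    have hα : α = β * inducedPi1Hom p e g := by
      rw [hg, mul_inv_cancel_left]
    have hhom : α = ⟦(c.map p.continuous).trans b⟧ := by
      rw [hα, induced_hom_mk p e c g hc.symm, ← hb]
      rfl
    rw [Phi_mk p hp e α _ hhom, Phi_mk p hp e β b hb.symm]
    rw [ltr_trans hp (c.map p.continuous) b e rfl (ltr_proj hp _ e rfl)]
    have hinner : ltr hp (c.map p.continuous) e rfl = e := by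
      refine (ltr_eq_lift' hp c.toContinuousMap (c.map p.continuous)
        (fun t => rfl) e rfl (by show c 0 = e; exact c.source)).trans ?_
      exact c.target
    exact ltr_congr hp b hinner _ _

lemma phi_surj [PathConnectedSpace E] (f : E) (hf : p f = p e) :
    ∃ α : FundamentalGroup X (p e), Phi p hp e α = f := by
  have γ0 : Path e f := PathConnectedSpace.somePath e f
  set a : Path (p e) (p e) := (γ0.map p.continuous).cast rfl hf.symm with hadef
  refine ⟨⟦a⟧, ?_⟩
  rw [Phi_mk p hp e _ a rfl]
  refine (ltr_eq_lift' hp γ0.toContinuousMap a (fun t => rfl) e rfl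
    (by show γ0 0 = e; exact γ0.source)).trans ?_
  exact γ0.target

theorem coveringMap_pi1_injective_index_aux' (E X : Type) [TopologicalSpace E]
    [TopologicalSpace X] [PathConnectedSpace E] [PathConnectedSpace X]
    (p : C(E, X)) (hp : IsCoveringMap p) (e : E) :
    Function.Injective (inducedPi1Hom p e) ∧
    ∀ n : ℕ, 0 < n → Nat.card (p ⁻¹' {p e}) = n →
      (inducedPi1Hom p e).range.index = n := by
  constructor
  · exact induced_injective p hp e
  · intro n hn hcard
    rw [Subgroup.index_eq_card, ← hcard]
    refine Nat.card_congr (Equiv.ofBijective (fun q => Quotient.liftOn' q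
      (fun α => (⟨Phi p hp e α, Phi_proj p hp e α⟩ : p ⁻¹' {p e}))
      (fun α β hr => ?_)) ⟨?_, ?_⟩)
    · have h1 : α⁻¹ * β ∈ (inducedPi1Hom p e).range := QuotientGroup.leftRel_apply.1 hr
      exact Subtype.ext ((phi_eq_iff p hp e β α).2 h1).symm
    · intro q₁ q₂
      refine Quotient.inductionOn₂' q₁ q₂ fun α β h => ?_
      have h2 : Phi p hp e α = Phi p hp e β := congrArg Subtype.val h
      exact Quotient.sound' (QuotientGroup.leftRel_apply.2
        ((phi_eq_iff p hp e β α).1 h2.symm))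
    · rintro ⟨f, hf⟩
      obtain ⟨α, hα⟩ := phi_surj p hp e f hf
      exact ⟨Quotient.mk'' α, Subtype.ext hα⟩

end Main

/-- If `p : E → X` is a covering map between path-connected spaces and `e ∈ E`, then the
induced map `π₁(E, e) → π₁(X, p e)` is injective, and if the fiber over `p e` is finite
of cardinality `n`, its image has index `n` in `π₁(X, p e)`. -/
theorem coveringMap_pi1_injective_index (E X : Type) [TopologicalSpace E]
    [TopologicalSpace X] [PathConnectedSpace E] [PathConnectedSpace X]
    (p : C(E, X)) (hp : IsCoveringMap p) (e : E) :
    Function.Injective (inducedPi1Hom p e) ∧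
    ∀ n : ℕ, 0 < n → Nat.card (p ⁻¹' {p e}) = n →
      (inducedPi1Hom p e).range.index = n :=
  coveringMap_pi1_injective_index_aux' E X p hp e
end
end

section
/- Let G be a nontrivial finite group and n a positive natural number. Let f : FreeGroup (Option G) →* Multiplicative (ZMod n) be the unique homomorphism sending each generator a_g = FreeGroup.of (some g) (g ∈ G) to the identity and a_* = FreeGroup.of none to Multiplicative.ofAdd 1. Then the map sending g ∈ G to the restriction to ker f of the automorphism of FreeGroup (Option G) induced by (some h ↦ some (g·h), none ↦ none) is an injective group homomorphism G → MulAut (ker f); i.e., G acts faithfully by automorphisms on the finite-index free subgroup ker f. -/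
/-- Let `G` be a nontrivial finite group and `n > 0`, and let
`f : FreeGroup (Option G) →* Multiplicative (ZMod n)` send each generator
`a_g = FreeGroup.of (some g)` to `1` and `a_* = FreeGroup.of none` to
`Multiplicative.ofAdd 1`. Then sending `g ∈ G` to the restriction to `ker f` of the
automorphism of `FreeGroup (Option G)` induced by `some h ↦ some (g * h)`,
`none ↦ none` is an injective group homomorphism `G → MulAut (ker f)`: `G` acts
faithfully by automorphisms on the finite-index free subgroup `ker f`. -/
theorem faithful_action_on_kernel (G : Type) [Group G] [Finite G] [Nontrivial G]
    (n : ℕ) (hn : 0 < n)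
    (f : FreeGroup (Option G) →* Multiplicative (ZMod n))
    (hf₁ : ∀ g : G, f (FreeGroup.of (some g)) = 1)
    (hf₂ : f (FreeGroup.of none) = Multiplicative.ofAdd 1) :
    ∃ Φ : G →* MulAut f.ker,
      Function.Injective Φ ∧
      ∀ (g : G) (x : f.ker),
        (↑(Φ g x) : FreeGroup (Option G)) =
          FreeGroup.map (Option.map (fun h => g * h)) ↑x := by
  classical
  have hcomp : ∀ g : G, f.comp (FreeGroup.map (Option.map (fun h => g * h))) = f := by
    intro g
    apply FreeGroup.ext_hom
    rintro (_ | h) <;> simp [hf₁, hf₂]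
  have hmem : ∀ (g : G) (x : FreeGroup (Option G)), x ∈ f.ker →
      FreeGroup.map (Option.map (fun h => g * h)) x ∈ f.ker := by
    intro g x hx
    have h := DFunLike.congr_fun (hcomp g) x
    simp only [MonoidHom.comp_apply] at h
    simpa [MonoidHom.mem_ker, h] using hx
  let A : G → (f.ker →* f.ker) := fun g =>
    ((FreeGroup.map (Option.map (fun h => g * h))).comp f.ker.subtype).codRestrict f.ker
      (fun x => hmem g x x.2)
  have hAval : ∀ (g : G) (x : f.ker), (A g x : FreeGroup (Option G)) =
      FreeGroup.map (Option.map (fun h => g * h)) (x : FreeGroup (Option G)) := fun _ _ => rfl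
  have hAcomp : ∀ (g g' : G) (x : f.ker), A g (A g' x) = A (g * g') x := by
    intro g g' x
    apply Subtype.ext
    rw [hAval, hAval, hAval, FreeGroup.map.comp]
    have he : ((Option.map fun h => g * h) ∘ Option.map fun h => g' * h) =
        Option.map fun h => g * g' * h := by
      funext o; cases o <;> simp [mul_assoc]
    rw [he]
  have hA1 : ∀ x : f.ker, A 1 x = x := by
    intro x
    apply Subtype.ext
    rw [hAval]
    simpa using FreeGroup.map.id (x : FreeGroup (Option G))
  let Φ : G →* MulAut f.ker :=
    { toFun := fun g =>
        { toFun := A g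
          invFun := A g⁻¹
          left_inv := fun x => by rw [hAcomp, inv_mul_cancel, hA1]
          right_inv := fun x => by rw [hAcomp, mul_inv_cancel, hA1]
          map_mul' := (A g).map_mul }
      map_one' := by
        ext x
        exact congrArg Subtype.val (hA1 x)
      map_mul' := by
        intro g g'
        ext x
        exact congrArg Subtype.val (hAcomp g g' x).symm }
  refine ⟨Φ, ?_, fun g x => rfl⟩
  intro g g' h
  have hx : (FreeGroup.of (some (1 : G)) : FreeGroup (Option G)) ∈ f.ker := by
    simp [MonoidHom.mem_ker, hf₁]
  have h2 : Φ g ⟨_, hx⟩ = Φ g' ⟨_, hx⟩ := by rw [h]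
  have h3 : FreeGroup.map (Option.map (fun h => g * h)) (FreeGroup.of (some (1 : G))) =
      FreeGroup.map (Option.map (fun h => g' * h)) (FreeGroup.of (some (1 : G))) :=
    congrArg Subtype.val h2
  simp only [FreeGroup.map.of, Option.map_some, mul_one] at h3
  exact Option.some_injective _ (FreeGroup.of_injective h3)
end
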